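/- arXiv:1808.06438 — 6 statements merged into one kernel-verified Lean document; each statement's English description precedes it below -/
import Mathlib

section
/- Let I be a polymatroidal monomial ideal in K[x_1,...,x_n]. Then I has linear quotients with respect to the lexicographical order of its minimal generators: for every u in G(I), the colon ideal (v ∈ G(I) : v ><sub>lex</sub> u) : u is generated by variables. -/
/-- A monomial in `n` variables, given by its exponent vector. -/
abbrev Mon (n : ℕ) := Fin n → ℕ

/-- Total degree of a monomial. -/
def mdeg {n : ℕ} (u : Mon n) : ℕ := ∑ i, u i

/-- The exponent vector of `x_j * (u / x_i)`. -/
def exch {n : ℕ} (u : Mon n) (i j : Fin n) : Mon n :=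
  fun l => u l - (if l = i then 1 else 0) + (if l = j then 1 else 0)

/-- Membership of the monomial `w` in the monomial ideal generated by the set `G`. -/
def memI {n : ℕ} (G : Set (Mon n)) (w : Mon n) : Prop :=
  ∃ u ∈ G, ∀ l, u l ≤ w l

/-- `G` (the set of minimal generators, all of one degree) is polymatroidal: the
exchange property holds. -/
def IsPolymatroidal {n : ℕ} (G : Set (Mon n)) : Prop :=
  ∀ u ∈ G, ∀ v ∈ G, ∀ i, v i < u i → ∃ j, u j < v j ∧ memI G (exch u i j)

/-- The (strict) lexicographic order on monomials of a common degree, induced by the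
variable ordering `x_{σ 0} > x_{σ 1} > ⋯ > x_{σ (n-1)}`. -/
def lexGT {n : ℕ} (σ : Fin n → Fin n) (u v : Mon n) : Prop :=
  ∃ i, v (σ i) < u (σ i) ∧ ∀ k, k < i → u (σ k) = v (σ k)

/-- `u ≥_lex v` with respect to the variable ordering given by `σ`. -/
def lexGE {n : ℕ} (σ : Fin n → Fin n) (u v : Mon n) : Prop :=
  u = v ∨ lexGT σ u v

/-- The (strict) reverse lexicographic order on monomials of a common degree, induced by
the variable ordering `x_{σ 0} > x_{σ 1} > ⋯ > x_{σ (n-1)}`. -/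
def rlexGT {n : ℕ} (σ : Fin n → Fin n) (u v : Mon n) : Prop :=
  ∃ i, u (σ i) < v (σ i) ∧ ∀ k, i < k → u (σ k) = v (σ k)

/-- `G` has linear quotients with respect to the order `gt`: for every `u ∈ G` the colon
ideal `(v ∈ G : gt v u) : u` is generated by variables, i.e. for every `v ∈ G` with
`gt v u` there is a variable `x_i` dividing `v : u` with `x_i·u` in the ideal generated
by the `gt`-larger generators. -/
def LinQuot {n : ℕ} (G : Set (Mon n)) (gt : Mon n → Mon n → Prop) : Prop :=
  ∀ u ∈ G, ∀ v ∈ G, gt v u →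
    ∃ i, u i < v i ∧
      ∃ w ∈ G, gt w u ∧ ∀ l, w l ≤ u l + (if l = i then 1 else 0)

/-- Since all generators have the same degree, the exchange property gives actual
membership of `exch u i j` in `G`. -/
lemma exch_mem {n d : ℕ} {G : Set (Mon n)} (hdeg : ∀ u ∈ G, mdeg u = d)
    (hpoly : IsPolymatroidal G) {u v : Mon n} (hu : u ∈ G) (hv : v ∈ G)
    {i : Fin n} (hi : v i < u i) :
    ∃ j, u j < v j ∧ exch u i j ∈ G := by
  obtain ⟨j, hj, w, hwG, hwle⟩ := hpoly u hu v hv i hi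
  refine ⟨j, hj, ?_⟩
  have hij : i ≠ j := by rintro rfl; omega
  have hkey : ∀ l, exch u i j l + (if l = i then 1 else 0)
      = u l + (if l = j then 1 else 0) := by
    intro l
    have hui : 1 ≤ u i := by omega
    simp only [exch]
    rcases eq_or_ne l i with rfl | h1
    · rw [if_pos rfl, if_neg hij]
      omega
    · rw [if_neg h1]
      rcases eq_or_ne l j with rfl | h2
      · rw [if_pos rfl]; omega
      · rw [if_neg h2]; omega
  have hsum : mdeg (exch u i j) = mdeg u := by
    have h := Finset.sum_congr rfl (fun l (_ : l ∈ Finset.univ) => hkey l)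
    rw [Finset.sum_add_distrib, Finset.sum_add_distrib] at h
    simp only [Finset.sum_ite_eq', Finset.mem_univ, if_true] at h
    have : mdeg (exch u i j) + 1 = mdeg u + 1 := by
      simpa [mdeg] using h
    omega
  have hwd : mdeg w = mdeg (exch u i j) := by
    rw [hsum, hdeg w hwG, hdeg u hu]
  have heq : ∀ l ∈ Finset.univ, w l = exch u i j l :=
    (Finset.sum_eq_sum_iff_of_le (fun l _ => hwle l)).mp hwd
  have : w = exch u i j := funext fun l => heq l (Finset.mem_univ l)
  rwa [← this]

lemma main_lemma {n d : ℕ} {G : Set (Mon n)} (hdeg : ∀ u ∈ G, mdeg u = d)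
    (hpoly : IsPolymatroidal G) :
    ∀ N : ℕ, ∀ u ∈ G, ∀ v ∈ G, (∑ k, ((u k - v k) + (v k - u k))) ≤ N →
      lexGT id v u →
      ∃ i j : Fin n, i < j ∧ u i < v i ∧ exch u j i ∈ G := by
  intro N
  induction N using Nat.strong_induction_on with
  | _ N IH =>
  intro u hu v hv hN hlex
  classical
  obtain ⟨i0, hi0, hpre⟩ := hlex
  simp only [id] at hi0 hpre
  set S := Finset.univ.filter (fun k => u k ≠ v k) with hS
  have hi0S : i0 ∈ S := by
    simp only [hS, Finset.mem_filter, Finset.mem_univ, true_and]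
    omega
  have hSne : S.Nonempty := ⟨i0, hi0S⟩
  set m := S.max' hSne with hm
  have hmS : m ∈ S := S.max'_mem hSne
  have hmax : ∀ k ∈ S, k ≤ m := fun k hk => S.le_max' k hk
  have hmdiff : u m ≠ v m := by
    simpa only [hS, Finset.mem_filter, Finset.mem_univ, true_and] using hmS
  have hi0m : i0 < m := by
    rcases lt_or_eq_of_le (hmax i0 hi0S) with h | h
    · exact h
    · exfalso
      have hall : ∀ k, k ≠ i0 → u k = v k := by
        intro k hk
        by_contra hne
        have hkS : k ∈ S := by
          simp only [hS, Finset.mem_filter, Finset.mem_univ, true_and]; exact hne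
        have hkm : k ≤ m := hmax k hkS
        rw [← h] at hkm
        rcases lt_or_eq_of_le hkm with h' | h'
        · exact hne (hpre k h').symm
        · exact hk h'
      have hsum : mdeg u = mdeg v := by rw [hdeg u hu, hdeg v hv]
      have h1 : u i0 + ∑ k ∈ Finset.univ.erase i0, u k = mdeg u :=
        Finset.add_sum_erase Finset.univ u (Finset.mem_univ i0)
      have h2 : v i0 + ∑ k ∈ Finset.univ.erase i0, v k = mdeg v :=
        Finset.add_sum_erase Finset.univ v (Finset.mem_univ i0)
      have h3 : ∑ k ∈ Finset.univ.erase i0, u k = ∑ k ∈ Finset.univ.erase i0, v k :=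
        Finset.sum_congr rfl (fun k hk => hall k (Finset.ne_of_mem_erase hk))
      omega
  rcases Nat.lt_or_ge (u m) (v m) with hcase | hcase
  · -- case (b): u m < v m, exchange on v
    obtain ⟨j, hj, hv'G⟩ := exch_mem hdeg hpoly hv hu hcase
    set v' := exch v m j with hv'
    have hjm : j ≠ m := by rintro rfl; omega
    have hi0j : i0 < j := by
      rcases lt_trichotomy j i0 with h | h | h
      · have := hpre j h; omega
      · rw [h] at hj; omega
      · exact h
    have hv'val : ∀ l, v' l = v l - (if l = m then 1 else 0) + (if l = j then 1 else 0) :=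
      fun l => rfl
    have hlex' : lexGT id v' u := by
      refine ⟨i0, ?_, ?_⟩
      · have h1 := hv'val i0
        rw [if_neg (ne_of_lt hi0m), if_neg (ne_of_lt hi0j)] at h1
        simp only [id]
        omega
      · intro k hk
        have h1 := hv'val k
        rw [if_neg (ne_of_lt (hk.trans hi0m)), if_neg (ne_of_lt (hk.trans hi0j))] at h1
        have h2 := hpre k hk
        simp only [id] at h2 ⊢
        omega
    have hmeas : (∑ k, ((u k - v' k) + (v' k - u k))) < ∑ k, ((u k - v k) + (v k - u k)) := by
      apply Finset.sum_lt_sum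
      · intro l _
        have h1 := hv'val l
        rcases eq_or_ne l m with rfl | h2
        · rw [if_pos rfl, if_neg (Ne.symm hjm)] at h1
          omega
        · rw [if_neg h2] at h1
          rcases eq_or_ne l j with rfl | h3
          · rw [if_pos rfl] at h1
            omega
          · rw [if_neg h3] at h1
            omega
      · refine ⟨m, Finset.mem_univ m, ?_⟩
        have h1 := hv'val m
        rw [if_pos rfl, if_neg (Ne.symm hjm)] at h1
        omega
    obtain ⟨i, j', hij', hui, hex⟩ := IH (∑ k, ((u k - v' k) + (v' k - u k)))
      (lt_of_lt_of_le hmeas hN) u hu v' hv'G le_rfl hlex'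
    refine ⟨i, j', hij', ?_, hex⟩
    have hij : i ≠ j := by
      rintro rfl
      have h1 := hv'val i
      rw [if_neg (by rintro rfl; omega : i ≠ m), if_pos rfl] at h1
      omega
    have h1 := hv'val i
    rw [if_neg hij] at h1
    rcases eq_or_ne i m with rfl | h2
    · rw [if_pos rfl] at h1
      omega
    · rw [if_neg h2] at h1
      omega
  · -- case (a): v m < u m
    have hvm : v m < u m := by omega
    obtain ⟨k, hk, hwG⟩ := exch_mem hdeg hpoly hu hv hvm
    have hkS : k ∈ S := by
      simp only [hS, Finset.mem_filter, Finset.mem_univ, true_and]; omega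
    have hkm : k < m := by
      rcases lt_or_eq_of_le (hmax k hkS) with h | h
      · exact h
      · rw [h] at hk; omega
    exact ⟨k, m, hkm, hk, hwG⟩

/-- A polymatroidal ideal has linear quotients with respect to the lexicographic
order of the minimal generators (induced by `x_1 > x_2 > ⋯ > x_n`). -/
theorem stmt_0 {n d : ℕ} (G : Set (Mon n)) (hdeg : ∀ u ∈ G, mdeg u = d)
    (hpoly : IsPolymatroidal G) :
    LinQuot G (lexGT id) := by
  intro u hu v hv hlex
  obtain ⟨i, j, hij, hui, hG⟩ := main_lemma hdeg hpoly _ u hu v hv le_rfl hlex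
  have hij' : i ≠ j := ne_of_lt hij
  refine ⟨i, hui, exch u j i, hG, ?_, ?_⟩
  · refine ⟨i, ?_, ?_⟩
    · have h : exch u j i i = u i + 1 := by
        simp [exch, hij']
      simp only [id_eq, h]
      omega
    · intro k hk
      have h : exch u j i k = u k := by
        simp [exch, (ne_of_lt (hk.trans hij) : k ≠ j), (ne_of_lt hk : k ≠ i)]
      simp only [id_eq, h]
  · intro l
    simp only [exch]
    rcases eq_or_ne l j with rfl | h1
    · rw [if_pos rfl, if_neg (Ne.symm hij')]
      omega
    · rw [if_neg h1]
      rcases eq_or_ne l i with rfl | h2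
      · rw [if_pos rfl]; omega
      · rw [if_neg h2]; omega
end

section
/- A monomial ideal I ⊂ K[x_1,...,x_n] generated in a single degree is polymatroidal if and only if I has linear quotients with respect to the lexicographical ordering of the minimal generators induced by every ordering (permutation) of the variables. -/
namespace Stmt2

variable {n d : ℕ}


variable {n d : ℕ}

lemma sum_off_two {f g : Fin n → ℕ} {p q : Fin n} (hpq : p ≠ q)
    (h : ∀ l, l ≠ p → l ≠ q → f l = g l) :
    (∑ l, f l) + (g p + g q) = (∑ l, g l) + (f p + f q) := by
  have hq : q ∈ Finset.univ.erase p := Finset.mem_erase.2 ⟨Ne.symm hpq, Finset.mem_univ q⟩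
  have hf1 : ∑ l ∈ Finset.univ.erase p, f l + f p = ∑ l, f l :=
    Finset.sum_erase_add _ _ (Finset.mem_univ p)
  have hf2 : ∑ l ∈ (Finset.univ.erase p).erase q, f l + f q = ∑ l ∈ Finset.univ.erase p, f l :=
    Finset.sum_erase_add _ _ hq
  have hg1 : ∑ l ∈ Finset.univ.erase p, g l + g p = ∑ l, g l :=
    Finset.sum_erase_add _ _ (Finset.mem_univ p)
  have hg2 : ∑ l ∈ (Finset.univ.erase p).erase q, g l + g q = ∑ l ∈ Finset.univ.erase p, g l :=
    Finset.sum_erase_add _ _ hq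
  have hcong : ∑ l ∈ (Finset.univ.erase p).erase q, f l
      = ∑ l ∈ (Finset.univ.erase p).erase q, g l := by
    apply Finset.sum_congr rfl
    intro l hl
    have h1 := (Finset.mem_erase.1 hl).1
    have h2 := (Finset.mem_erase.1 (Finset.mem_erase.1 hl).2).1
    exact h l h2 h1
  omega

lemma eq_of_le_of_sum_eq {x y : Mon n} (h : ∀ l, x l ≤ y l) (hs : mdeg x = mdeg y) : x = y := by
  funext l
  by_contra hne
  have hlt : x l < y l := lt_of_le_of_ne (h l) hne
  have : mdeg x < mdeg y := by
    apply Finset.sum_lt_sum (fun i _ => h i) ⟨l, Finset.mem_univ l, hlt⟩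
  omega

lemma sub_sum_comm {x y : Mon n} (hs : mdeg x = mdeg y) :
    ∑ l, (x l - y l) = ∑ l, (y l - x l) := by
  have h1 : ∑ l, ((x l - y l) + min (x l) (y l)) = mdeg x := by
    apply Finset.sum_congr rfl; intro l _; omega
  have h2 : ∑ l, ((y l - x l) + min (x l) (y l)) = mdeg y := by
    apply Finset.sum_congr rfl; intro l _; omega
  rw [Finset.sum_add_distrib] at h1 h2
  omega

lemma mdeg_exch {u : Mon n} {i j : Fin n} (hi : 1 ≤ u i) (hij : j ≠ i) :
    mdeg (exch u i j) = mdeg u := by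
  have key := sum_off_two (f := exch u i j) (g := u) (p := i) (q := j) (Ne.symm hij)
    (by intro l h1 h2; simp [exch, h1, h2])
  have e1 : exch u i j i = u i - 1 := by simp [exch, (Ne.symm hij : i ≠ j)]
  have e2 : exch u i j j = u j + 1 := by simp [exch, hij]
  rw [e1, e2] at key
  unfold mdeg
  omega

lemma mem_of_memI {G : Set (Mon n)} (hdeg : ∀ u ∈ G, mdeg u = d) {w : Mon n}
    (hw : memI G w) (hwd : mdeg w = d) : w ∈ G := by
  obtain ⟨g, hg, hle⟩ := hw
  have : g = w := eq_of_le_of_sum_eq hle (by rw [hdeg g hg, hwd])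
  exact this ▸ hg

lemma sum_one {f : Fin n → ℕ} {i : Fin n} (h : ∑ l, f l = 1) (hi : 1 ≤ f i) :
    f i = 1 ∧ ∀ l, l ≠ i → f l = 0 := by
  have h1 : ∑ l ∈ Finset.univ.erase i, f l + f i = ∑ l, f l :=
    Finset.sum_erase_add _ _ (Finset.mem_univ i)
  have h2 : ∑ l ∈ Finset.univ.erase i, f l = 0 := by omega
  refine ⟨by omega, fun l hl => ?_⟩
  exact Finset.sum_eq_zero_iff.1 h2 l (Finset.mem_erase.2 ⟨hl, Finset.mem_univ l⟩)

lemma sum_two {f : Fin n → ℕ} {i : Fin n} (h : ∑ l, f l = 2) (hi : 1 ≤ f i) :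
    (f i = 2 ∧ ∀ l, l ≠ i → f l = 0) ∨
      ∃ s, s ≠ i ∧ f i = 1 ∧ f s = 1 ∧ ∀ l, l ≠ i → l ≠ s → f l = 0 := by
  have h1 : ∑ l ∈ Finset.univ.erase i, f l + f i = ∑ l, f l :=
    Finset.sum_erase_add _ _ (Finset.mem_univ i)
  by_cases hfi : 2 ≤ f i
  · left
    have h2 : ∑ l ∈ Finset.univ.erase i, f l = 0 := by omega
    refine ⟨by omega, fun l hl => Finset.sum_eq_zero_iff.1 h2 l
      (Finset.mem_erase.2 ⟨hl, Finset.mem_univ l⟩)⟩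
  · right
    have hfi1 : f i = 1 := by omega
    have h2 : ∑ l ∈ Finset.univ.erase i, f l = 1 := by omega
    have hex : ∃ s ∈ Finset.univ.erase i, f s ≠ 0 := by
      by_contra hc
      push_neg at hc
      have : ∑ l ∈ Finset.univ.erase i, f l = 0 := Finset.sum_eq_zero hc
      omega
    obtain ⟨s, hs, hfs⟩ := hex
    have hsi : s ≠ i := (Finset.mem_erase.1 hs).1
    have h3 : ∑ l ∈ (Finset.univ.erase i).erase s, f l + f s = ∑ l ∈ Finset.univ.erase i, f l :=
      Finset.sum_erase_add _ _ hs
    have h4 : ∑ l ∈ (Finset.univ.erase i).erase s, f l = 0 := by omega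
    refine ⟨s, hsi, hfi1, by omega, fun l hl1 hl2 => ?_⟩
    exact Finset.sum_eq_zero_iff.1 h4 l
      (Finset.mem_erase.2 ⟨hl2, Finset.mem_erase.2 ⟨hl1, Finset.mem_univ l⟩⟩)

lemma decomp {u w : Mon n} {i : Fin n} (hdeg : mdeg w = mdeg u)
    (hle : ∀ l, w l ≤ u l + (if l = i then 1 else 0)) (hne : w ≠ u) :
    w i = u i + 1 ∧ ∃ c, c ≠ i ∧ w c + 1 = u c ∧ ∀ l, l ≠ i → l ≠ c → w l = u l := by
  have hwi : w i = u i + 1 := by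
    by_contra h
    have h1 : ∀ l, w l ≤ u l := by
      intro l
      have h2 := hle l
      by_cases hl : l = i
      · subst hl; rw [if_pos rfl] at h2; omega
      · rw [if_neg hl] at h2; omega
    exact hne (eq_of_le_of_sum_eq h1 hdeg)
  have h2 : ∑ l, (w l - u l) = 1 := by
    have : ∀ l ∈ Finset.univ, w l - u l = if l = i then 1 else 0 := by
      intro l _
      by_cases hl : l = i
      · subst hl; simp [hwi]
      · have := hle l; simp only [if_neg hl] at this ⊢; omega
    rw [Finset.sum_congr rfl this]
    simp
  have h3 : ∑ l, (u l - w l) = 1 := by rw [sub_sum_comm hdeg.symm]; exact h2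
  have hex : ∃ c, u c - w c ≠ 0 := by
    by_contra hc
    push_neg at hc
    have : ∑ l, (u l - w l) = 0 := Finset.sum_eq_zero (fun l _ => hc l)
    omega
  obtain ⟨c, hc⟩ := hex
  have hci : c ≠ i := by intro h; subst h; omega
  obtain ⟨hc1, hc0⟩ := sum_one (f := fun l => u l - w l) h3 (by show 1 ≤ u c - w c; omega)
  have hc1' : u c - w c = 1 := hc1
  refine ⟨hwi, c, hci, by omega, fun l hl1 hl2 => ?_⟩
  have e1 : u l - w l = 0 := hc0 l hl2
  have e2 := hle l
  rw [if_neg hl1] at e2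
  omega

lemma decomp' {u w : Mon n} {i : Fin n} (hdeg : mdeg w = mdeg u)
    (hi : w i + 1 = u i) (hle : ∀ l, l ≠ i → u l ≤ w l) :
    ∃ j, j ≠ i ∧ w j = u j + 1 ∧ ∀ l, l ≠ i → l ≠ j → w l = u l := by
  have h2 : ∑ l, (u l - w l) = 1 := by
    have : ∀ l ∈ Finset.univ, u l - w l = if l = i then 1 else 0 := by
      intro l _
      by_cases hl : l = i
      · subst hl; simp; omega
      · have := hle l hl; simp only [if_neg hl]; omega
    rw [Finset.sum_congr rfl this]
    simp
  have h3 : ∑ l, (w l - u l) = 1 := by rw [sub_sum_comm hdeg]; exact h2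
  have hex : ∃ j, w j - u j ≠ 0 := by
    by_contra hc
    push_neg at hc
    have : ∑ l, (w l - u l) = 0 := Finset.sum_eq_zero (fun l _ => hc l)
    omega
  obtain ⟨j, hj⟩ := hex
  have hji : j ≠ i := by intro h; subst h; omega
  obtain ⟨hj1, hj0⟩ := sum_one (f := fun l => w l - u l) h3 (by show 1 ≤ w j - u j; omega)
  have hj1' : w j - u j = 1 := hj1
  refine ⟨j, hji, by omega, fun l hl1 hl2 => ?_⟩
  have e1 : w l - u l = 0 := hj0 l hl2
  have e2 := hle l hl1
  omega

lemma exists_sorted (ρ : Fin n → ℕ) :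
    ∃ σ : Fin n → Fin n, Function.Bijective σ ∧ Monotone (ρ ∘ σ) := by
  exact ⟨Tuple.sort ρ, (Tuple.sort ρ).bijective, Tuple.monotone_sort ρ⟩

lemma lexGT_ne {σ : Fin n → Fin n} {x y : Mon n} (h : lexGT σ x y) : x ≠ y := by
  obtain ⟨i, hi, -⟩ := h
  intro he; rw [he] at hi; omega

lemma lexGT_intro {σ : Fin n → Fin n} {ρ : Fin n → ℕ}
    (hbij : Function.Bijective σ) (hmono : Monotone (ρ ∘ σ)) {x y : Mon n}
    (l₀ : Fin n) (hd : x l₀ ≠ y l₀)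
    (hmin : ∀ l, x l ≠ y l → (∀ l', x l' ≠ y l' → ρ l ≤ ρ l') → y l < x l) :
    lexGT σ x y := by
  classical
  set T : Finset (Fin n) := Finset.univ.filter (fun k => x (σ k) ≠ y (σ k)) with hT
  obtain ⟨k₀', hk₀'⟩ := hbij.2 l₀
  have hTne : T.Nonempty := ⟨k₀', by simp [hT, hk₀', hd]⟩
  set k₀ := T.min' hTne with hk₀
  have hk₀T : k₀ ∈ T := T.min'_mem hTne
  have hk₀d : x (σ k₀) ≠ y (σ k₀) := by simpa [hT] using hk₀T
  have hmin' : ∀ l', x l' ≠ y l' → ρ (σ k₀) ≤ ρ l' := by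
    intro l' hl'
    obtain ⟨k', hk'⟩ := hbij.2 l'
    have hk'T : k' ∈ T := by simp [hT, hk', hl']
    have : k₀ ≤ k' := T.min'_le k' hk'T
    have := hmono this
    simpa [hk'] using this
  refine ⟨k₀, hmin (σ k₀) hk₀d hmin', ?_⟩
  intro k hk
  by_contra hne
  have hkT : k ∈ T := by simp [hT, hne]
  have := T.min'_le k hkT
  omega

lemma lexGT_decode {σ : Fin n → Fin n} {ρ : Fin n → ℕ}
    (hbij : Function.Bijective σ) (hmono : Monotone (ρ ∘ σ)) {x w : Mon n} {a c : Fin n}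
    (h : lexGT σ w x) (huniq : ∀ l, l ≠ a → w l ≤ x l) (hc : w c ≠ x c) (hca : c ≠ a) :
    ρ a ≤ ρ c := by
  obtain ⟨idx, hidx, hpre⟩ := h
  have hσa : σ idx = a := by
    by_contra hne
    have := huniq (σ idx) hne
    omega
  obtain ⟨kc, hkc⟩ := hbij.2 c
  have hlt : idx < kc := by
    rcases lt_trichotomy kc idx with h1 | h1 | h1
    · have h2 := hpre kc h1
      rw [hkc] at h2
      exact absurd h2 hc
    · exact absurd (by rw [← hkc, h1, hσa] : c = a) hca
    · exact h1
  have := hmono (le_of_lt hlt)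
  simpa [hσa, hkc] using this

lemma dist_le (x y : Mon n) : ∑ l, (y l - x l) ≤ mdeg y := by
  unfold mdeg
  exact Finset.sum_le_sum (fun l _ => Nat.sub_le _ _)

lemma phi_le (x y : Mon n) : ∑ l, (y l - x l)^2 ≤ (∑ l, (y l - x l)) * (∑ l, (y l - x l)) := by
  have h1 : ∀ l ∈ Finset.univ, (y l - x l)^2 ≤ (y l - x l) * (∑ m, (y m - x m)) := by
    intro l _
    have : y l - x l ≤ ∑ m, (y m - x m) :=
      Finset.single_le_sum (f := fun m => y m - x m) (fun m _ => Nat.zero_le _)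
        (Finset.mem_univ l)
    calc (y l - x l)^2 = (y l - x l) * (y l - x l) := sq (y l - x l) ▸ by ring
    _ ≤ (y l - x l) * (∑ m, (y m - x m)) := Nat.mul_le_mul_left _ this
  calc ∑ l, (y l - x l)^2 ≤ ∑ l, ((y l - x l) * (∑ m, (y m - x m))) := Finset.sum_le_sum h1
  _ = (∑ l, (y l - x l)) * (∑ l, (y l - x l)) := by rw [← Finset.sum_mul]


lemma forward {G : Set (Mon n)} (hdeg : ∀ u ∈ G, mdeg u = d) (hpoly : IsPolymatroidal G)
    (σ : Fin n → Fin n) : LinQuot G (lexGT σ) := by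
  intro u hu v hv hgt
  obtain ⟨idx, hidx, hpre⟩ := hgt
  have key : ∀ N (w : Mon n), w ∈ G → (∑ l, (w l - u l)) ≤ N →
      (∀ k, k < idx → w (σ k) = u (σ k)) → u (σ idx) < w (σ idx) →
      ∃ w', w' ∈ G ∧ (∀ k, k < idx → w' (σ k) = u (σ k)) ∧ u (σ idx) < w' (σ idx) ∧
        ∀ l, w' l ≤ u l + (if l = σ idx then 1 else 0) := by
    intro N
    induction N with
    | zero =>
      intro w hw hsum hpre' hgt'
      exfalso
      have h2 : w (σ idx) - u (σ idx) ≤ ∑ l, (w l - u l) :=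
        Finset.single_le_sum (f := fun l => w l - u l) (fun m _ => Nat.zero_le _)
          (Finset.mem_univ _)
      omega
    | succ N ih =>
      intro w hw hsum hpre' hgt'
      by_cases hdone : ∀ l, w l ≤ u l + (if l = σ idx then 1 else 0)
      · exact ⟨w, hw, hpre', hgt', hdone⟩
      · push_neg at hdone
        obtain ⟨c, hc⟩ := hdone
        have hcu : u c < w c := by
          by_cases h : c = σ idx
          · rw [if_pos h] at hc; omega
          · rw [if_neg h] at hc; omega
        obtain ⟨j, hj, hjmem⟩ := hpoly w hw u hu c hcu
        have hcj : c ≠ j := fun h => by rw [h] at hcu; omega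
        have hz : exch w c j ∈ G :=
          mem_of_memI hdeg hjmem
            (by rw [mdeg_exch (by omega) (Ne.symm hcj)]; exact hdeg w hw)
        have hzc : exch w c j c = w c - 1 := by simp [exch, hcj]
        have hzj : exch w c j j = w j + 1 := by
          simp [exch, Ne.symm hcj]
        have hzo : ∀ l, l ≠ c → l ≠ j → exch w c j l = w l := by
          intro l h1 h2; simp [exch, h1, h2]
        have hks := sum_off_two (f := fun l => exch w c j l - u l) (g := fun l => w l - u l)
          (p := c) (q := j) hcj
          (by intro l h1 h2; show exch w c j l - u l = w l - u l; rw [hzo l h1 h2])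
        beta_reduce at hks
        have hsum' : (∑ l, (exch w c j l - u l)) ≤ N := by
          rw [hzc, hzj] at hks; omega
        have hpre'' : ∀ k, k < idx → exch w c j (σ k) = u (σ k) := by
          intro k hk
          have h1 : σ k ≠ c := fun he => by
            rw [← he, hpre' k hk] at hcu; omega
          have h2 : σ k ≠ j := fun he => by
            rw [← he, hpre' k hk] at hj; omega
          rw [hzo _ h1 h2, hpre' k hk]
        have hgt'' : u (σ idx) < exch w c j (σ idx) := by
          by_cases h1 : σ idx = c
          · have hc' := hc
            rw [if_pos h1.symm] at hc'
            rw [h1, hzc]; omega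
          · have h2 : σ idx ≠ j := fun he => by rw [← he] at hj; omega
            rw [hzo _ h1 h2]; exact hgt'
        exact ih (exch w c j) hz hsum' hpre'' hgt''
  have hstart : ∑ l, (v l - u l) ≤ d := le_trans (dist_le u v) (le_of_eq (hdeg v hv))
  obtain ⟨w', hw'G, hw'pre, hw'gt, hw'le⟩ := key d v hv hstart
    (fun k hk => hpre k hk) hidx
  exact ⟨σ idx, hidx, w', hw'G, ⟨idx, hw'gt, fun k hk => hw'pre k hk⟩, hw'le⟩


lemma m2a {G : Set (Mon n)} (hdeg : ∀ u ∈ G, mdeg u = d)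
    (hLQ : ∀ σ : Fin n → Fin n, Function.Bijective σ → LinQuot G (lexGT σ))
    {u v : Mon n} {i : Fin n} (hu : u ∈ G) (hv : v ∈ G)
    (h2 : u i = v i + 2) (hle : ∀ l, l ≠ i → u l ≤ v l) :
    ∃ j, u j < v j ∧ exch u i j ∈ G := by
  classical
  set ρ : Fin n → ℕ := fun l => if l = i then 1 else if u l < v l then 2 else 0 with hρ
  obtain ⟨σ, hbij, hmono⟩ := exists_sorted ρ
  have hgt : lexGT σ u v := by
    apply lexGT_intro hbij hmono i (by omega)
    intro l hl hminl
    by_cases hli : l = i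
    · subst hli; omega
    · exfalso
      have hulv : u l < v l := lt_of_le_of_ne (hle l hli) hl
      have h1 := hminl i (by omega)
      have e1 : ρ l = 2 := by simp [hρ, hli, hulv]
      have e2 : ρ i = 1 := by simp [hρ]
      omega
  obtain ⟨i₁, hi₁, w, hw, hgtw, hwle⟩ := hLQ σ hbij v hv u hu hgt
  have hi₁i : i₁ = i := by
    by_contra hne
    have := hle i₁ hne
    omega
  subst hi₁i
  have hdw : mdeg w = mdeg v := by rw [hdeg w hw, hdeg v hv]
  obtain ⟨hwi, c, hci, hcv, hrest⟩ := decomp hdw hwle (lexGT_ne hgtw)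
  have huniq : ∀ l, l ≠ i₁ → w l ≤ v l := by
    intro l hl
    by_cases hlc : l = c
    · subst hlc; omega
    · rw [hrest l hl hlc]
  have hρc : ρ i₁ ≤ ρ c := lexGT_decode hbij hmono hgtw huniq (by omega) hci
  have hcS : u c < v c := by
    by_contra hcon
    have e1 : ρ i₁ = 1 := by simp [hρ]
    have e2 : ρ c = 0 := by simp [hρ, hci, hcon]
    omega
  -- w relative to u
  have h1 : w i₁ + 1 = u i₁ := by omega
  have h2' : ∀ l, l ≠ i₁ → u l ≤ w l := by
    intro l hl
    by_cases hlc : l = c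
    · subst hlc; omega
    · rw [hrest l hl hlc]; exact hle l hl
  have hdwu : mdeg w = mdeg u := by rw [hdeg w hw, hdeg u hu]
  obtain ⟨j, hji, hwj, hjrest⟩ := decomp' hdwu h1 h2'
  refine ⟨j, ?_, ?_⟩
  · by_cases hjc : j = c
    · subst hjc; omega
    · have := hrest j hji hjc
      omega
  · have : exch u i₁ j = w := by
      funext l
      show u l - (if l = i₁ then 1 else 0) + (if l = j then 1 else 0) = w l
      by_cases hl1 : l = i₁
      · subst hl1; rw [if_pos rfl, if_neg (Ne.symm hji)]; omega
      · rw [if_neg hl1]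
        by_cases hl2 : l = j
        · subst hl2; rw [if_pos rfl]; omega
        · rw [if_neg hl2, hjrest l hl1 hl2]; omega
    rw [this]; exact hw

lemma m2b {G : Set (Mon n)} (hdeg : ∀ u ∈ G, mdeg u = d)
    (hLQ : ∀ σ : Fin n → Fin n, Function.Bijective σ → LinQuot G (lexGT σ))
    {u v : Mon n} {i s : Fin n} (hu : u ∈ G) (hv : v ∈ G) (hsi : s ≠ i)
    (h2 : u i = v i + 1) (h3 : u s = v s + 1) (hle : ∀ l, l ≠ i → l ≠ s → u l ≤ v l) :
    ∃ j, u j < v j ∧ exch u i j ∈ G := by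
  classical
  set ρ : Fin n → ℕ := fun l => if l = i then 3 else if l = s then 1 else if u l < v l then 2 else 0 with hρ
  obtain ⟨σ, hbij, hmono⟩ := exists_sorted ρ
  have eρi : ρ i = 3 := by simp [hρ]
  have eρs : ρ s = 1 := by simp [hρ, hsi]
  have hgt : lexGT σ u v := by
    apply lexGT_intro hbij hmono s (by omega)
    intro l hl hminl
    by_cases hls : l = s
    · subst hls; omega
    · by_cases hli : l = i
      · subst hli; omega
      · exfalso
        have hulv : u l < v l := lt_of_le_of_ne (hle l hli hls) hl
        have h1 := hminl s (by omega)
        have e1 : ρ l = 2 := by simp [hρ, hli, hls, hulv]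
        omega
  obtain ⟨i₁, hi₁, w, hw, hgtw, hwle⟩ := hLQ σ hbij v hv u hu hgt
  have hdw : mdeg w = mdeg v := by rw [hdeg w hw, hdeg v hv]
  obtain ⟨hwi, c, hci, hcv, hrest⟩ := decomp hdw hwle (lexGT_ne hgtw)
  have huniq : ∀ l, l ≠ i₁ → w l ≤ v l := by
    intro l hl
    by_cases hlc : l = c
    · subst hlc; omega
    · rw [hrest l hl hlc]
  have hρc : ρ i₁ ≤ ρ c := lexGT_decode hbij hmono hgtw huniq (by omega) hci
  have ρdef : ∀ l, ρ l = if l = i then 3 else if l = s then 1 else if u l < v l then 2 else 0 :=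
    fun l => rfl
  have hi₁cases : i₁ = i ∨ i₁ = s := by
    by_contra hcon
    push_neg at hcon
    have := hle i₁ hcon.1 hcon.2
    omega
  have hi₁s : i₁ = s := by
    rcases hi₁cases with h | h
    · exfalso
      have e0 : ρ i₁ = 3 := by rw [h]; exact eρi
      have hc3 : 3 ≤ ρ c := by omega
      have hcieq : c = i := by
        by_contra hcon
        rw [ρdef c, if_neg hcon] at hc3
        by_cases e2 : c = s
        · rw [if_pos e2] at hc3; omega
        · rw [if_neg e2] at hc3
          by_cases e3 : u c < v c
          · rw [if_pos e3] at hc3; omega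
          · rw [if_neg e3] at hc3; omega
      exact absurd (hcieq.trans h.symm) hci
    · exact h
  rw [hi₁s] at hi₁ hwi hci hrest huniq hρc hwle
  by_cases hcimain : c = i
  · -- y := w = v + e_s - e_i ; apply m2a to (u, y, i)
    rw [hcimain] at hcv hci hrest
    have hy2 : u i = w i + 2 := by omega
    have hyle : ∀ l, l ≠ i → u l ≤ w l := by
      intro l hl
      by_cases hls : l = s
      · subst hls; omega
      · rw [hrest l hls hl]; exact hle l hl hls
    obtain ⟨j, hj1, hj2⟩ := m2a hdeg hLQ hu hw hy2 hyle
    refine ⟨j, ?_, hj2⟩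
    have hjs : j ≠ s := by intro he; rw [he] at hj1; omega
    have hji : j ≠ i := by intro he; rw [he] at hj1; omega
    rw [hrest j hjs hji] at hj1
    exact hj1
  · have hcS : u c < v c := by
      by_contra hcon
      have e2 : ρ c = 0 := by simp [hρ, hcimain, hci, hcon]
      omega
    have hwi' : w i + 1 = u i := by
      have hine : i ≠ s := Ne.symm hsi
      have hic : i ≠ c := fun he => by rw [← he] at hcS; omega
      rw [hrest i hine hic]; omega
    have h2' : ∀ l, l ≠ i → u l ≤ w l := by
      intro l hl
      by_cases hls : l = s
      · subst hls; omega
      · by_cases hlc : l = c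
        · subst hlc; omega
        · rw [hrest l hls hlc]; exact hle l hl hls
    have hdwu : mdeg w = mdeg u := by rw [hdeg w hw, hdeg u hu]
    obtain ⟨j, hji, hwj, hjrest⟩ := decomp' hdwu hwi' h2'
    refine ⟨j, ?_, ?_⟩
    · have hjs : j ≠ s := by intro he; rw [he] at hwj; omega
      by_cases hjc : j = c
      · subst hjc; omega
      · rw [hrest j hjs hjc] at hwj; omega
    · have : exch u i j = w := by
        funext l
        show u l - (if l = i then 1 else 0) + (if l = j then 1 else 0) = w l
        by_cases hl1 : l = i
        · subst hl1; rw [if_pos rfl, if_neg (Ne.symm hji)]; omega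
        · rw [if_neg hl1]
          by_cases hl2 : l = j
          · subst hl2; rw [if_pos rfl]; omega
          · rw [if_neg hl2, hjrest l hl1 hl2]; omega
      rw [this]; exact hw

set_option maxHeartbeats 1000000 in
lemma reverse {G : Set (Mon n)} (hdeg : ∀ u ∈ G, mdeg u = d)
    (hLQ : ∀ σ : Fin n → Fin n, Function.Bijective σ → LinQuot G (lexGT σ)) :
    IsPolymatroidal G := by
  classical
  set K := d * d + 2 with hK
  have main : ∀ N : ℕ, ∀ u v : Mon n, ∀ i : Fin n, u ∈ G → v ∈ G → v i < u i →
      (∑ l, (v l - u l)) * K + (K - ∑ l, (v l - u l)^2) < N →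
      ∃ j, u j < v j ∧ memI G (exch u i j) := by
    intro N
    induction N with
    | zero => intro u v i hu hv hvi hM; omega
    | succ N ih =>
      intro u v i hu hv hvi hM
      have hud : mdeg u = d := hdeg u hu
      have hvd : mdeg v = d := hdeg v hv
      have hDd : ∑ l, (v l - u l) ≤ d := le_trans (dist_le u v) (le_of_eq hvd)
      have hΦd : ∑ l, (v l - u l)^2 ≤ d * d :=
        le_trans (phi_le u v) (Nat.mul_le_mul hDd hDd)
      have hdefsum : ∑ l, (u l - v l) = ∑ l, (v l - u l) :=
        sub_sum_comm (by rw [hud, hvd])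
      have hsb : ∀ l, v l - u l ≤ ∑ m, (v m - u m) := fun l =>
        Finset.single_le_sum (f := fun m => v m - u m) (fun m _ => Nat.zero_le _)
          (Finset.mem_univ l)
      rcases Nat.lt_or_ge (∑ l, (v l - u l)) 3 with hD3 | hD3
      · have hcases : (∑ l, (v l - u l)) = 0 ∨ (∑ l, (v l - u l)) = 1 ∨
            (∑ l, (v l - u l)) = 2 := by omega
        rcases hcases with h0 | h1 | h2
        · exfalso
          have hz : ∀ l, v l ≤ u l := by intro l; have := hsb l; omega
          have : v = u := eq_of_le_of_sum_eq hz (by rw [hud, hvd])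
          rw [this] at hvi; omega
        · -- distance 1
          have h1' : ∑ l, (u l - v l) = 1 := by omega
          obtain ⟨hii, hrest⟩ := sum_one (f := fun l => u l - v l) h1'
            (by show 1 ≤ u i - v i; omega)
          have hii' : u i - v i = 1 := hii
          have hle' : ∀ l, l ≠ i → u l ≤ v l := by
            intro l hl
            have : u l - v l = 0 := hrest l hl
            omega
          obtain ⟨j, hji, hvj, hjrest⟩ := decomp' (u := u) (w := v)
            (by rw [hud, hvd]) (by omega) hle'
          refine ⟨j, by omega, ?_⟩
          have hE : exch u i j = v := by
            funext l
            show u l - (if l = i then 1 else 0) + (if l = j then 1 else 0) = v l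
            by_cases e1 : l = i
            · rw [e1, if_pos rfl, if_neg (Ne.symm hji)]; omega
            · rw [if_neg e1]
              by_cases e2 : l = j
              · rw [e2, if_pos rfl]; omega
              · rw [if_neg e2]
                have := hjrest l e1 e2
                omega
          rw [hE]; exact ⟨v, hv, fun l => le_refl _⟩
        · -- distance 2
          have h2' : ∑ l, (u l - v l) = 2 := by omega
          rcases sum_two (f := fun l => u l - v l) h2' (by show 1 ≤ u i - v i; omega)
            with ⟨hii, hrest⟩ | ⟨s, hsi, hii, hss, hrest⟩
          · have hii' : u i - v i = 2 := hii
            have hle' : ∀ l, l ≠ i → u l ≤ v l := by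
              intro l hl
              have : u l - v l = 0 := hrest l hl
              omega
            obtain ⟨j, hj1, hj2⟩ := m2a hdeg hLQ hu hv (by omega) hle'
            exact ⟨j, hj1, ⟨_, hj2, fun l => le_refl _⟩⟩
          · have hii' : u i - v i = 1 := hii
            have hss' : u s - v s = 1 := hss
            have hsvs : v s < u s := by omega
            have hle' : ∀ l, l ≠ i → l ≠ s → u l ≤ v l := by
              intro l hl1 hl2
              have : u l - v l = 0 := hrest l hl1 hl2
              omega
            obtain ⟨j, hj1, hj2⟩ := m2b hdeg hLQ hu hv hsi (by omega) (by omega) hle'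
            exact ⟨j, hj1, ⟨_, hj2, fun l => le_refl _⟩⟩
      · -- distance ≥ 3
        set ρ : Fin n → ℕ := fun l => if l = i then d+3 else if v l < u l then d+2
          else if u l < v l then (v l - u l) + 1 else 0 with hρ
        have ρdef : ∀ l, ρ l = if l = i then d+3 else if v l < u l then d+2
            else if u l < v l then (v l - u l) + 1 else 0 := fun l => rfl
        obtain ⟨σ, hbij, hmono⟩ := exists_sorted ρ
        have hSne : ∃ l₀, u l₀ < v l₀ := by
          by_contra hcon
          push_neg at hcon
          have : ∑ l, (v l - u l) = 0 := by
            apply Finset.sum_eq_zero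
            intro l _
            have := hcon l
            omega
          omega
        obtain ⟨l₀, hl₀⟩ := hSne
        have hl₀i : l₀ ≠ i := by intro he; rw [he] at hl₀; omega
        have eρl₀ : ρ l₀ = (v l₀ - u l₀) + 1 := by
          rw [ρdef, if_neg hl₀i, if_neg (by omega), if_pos hl₀]
        have hgt : lexGT σ v u := by
          apply lexGT_intro hbij hmono l₀ (by omega)
          intro l hl hminl
          have hm := hminl l₀ (by omega)
          by_cases hli : l = i
          · exfalso
            have : ρ l = d + 3 := by rw [ρdef, if_pos hli]
            have := hsb l₀
            omega
          · by_cases hlv : v l < u l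
            · exfalso
              have : ρ l = d + 2 := by rw [ρdef, if_neg hli, if_pos hlv]
              have := hsb l₀
              omega
            · omega
        obtain ⟨i₀, hi₀, w, hwG, hgtw, hwle⟩ := hLQ σ hbij u hu v hv hgt
        have hwd : mdeg w = d := hdeg w hwG
        obtain ⟨hwi₀, c, hci₀, hcu, hrest⟩ := decomp (u := u) (w := w)
          (by rw [hwd, hud]) hwle (lexGT_ne hgtw)
        have hi₀i : i₀ ≠ i := by intro he; rw [he] at hi₀; omega
        have huniq : ∀ l, l ≠ i₀ → w l ≤ u l := by
          intro l hl
          by_cases hlc : l = c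
          · subst hlc; omega
          · rw [hrest l hl hlc]
        have hρc : ρ i₀ ≤ ρ c := lexGT_decode hbij hmono hgtw huniq (by omega) hci₀
        have eρi₀ : ρ i₀ = (v i₀ - u i₀) + 1 := by
          rw [ρdef, if_neg hi₀i, if_neg (by omega), if_pos hi₀]
        by_cases hc_i : c = i
        · refine ⟨i₀, hi₀, ?_⟩
          rw [hc_i] at hcu hrest
          have hE : exch u i i₀ = w := by
            funext l
            show u l - (if l = i then 1 else 0) + (if l = i₀ then 1 else 0) = w l
            by_cases e1 : l = i
            · rw [e1, if_pos rfl, if_neg (Ne.symm hi₀i)]; omega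
            · rw [if_neg e1]
              by_cases e2 : l = i₀
              · rw [e2, if_pos rfl]; omega
              · rw [if_neg e2]
                have := hrest l e2 e1
                omega
          rw [hE]; exact ⟨w, hwG, fun l => le_refl _⟩
        · have hic : i ≠ c := fun he => hc_i he.symm
          have hcicases : v c < u c ∨ u c < v c := by
            by_contra hcon
            push_neg at hcon
            have : ρ c = 0 := by
              rw [ρdef, if_neg hc_i, if_neg (by omega), if_neg (by omega)]
            omega
          have hwin : v i < w i := by
            have hwi : w i = u i := hrest i (Ne.symm hi₀i) hic
            omega
          have hkey := sum_off_two (f := fun l => v l - w l) (g := fun l => v l - u l)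
            (p := i₀) (q := c) (Ne.symm hci₀)
            (fun l h1 h2 => by show v l - w l = v l - u l; rw [hrest l h1 h2])
          beta_reduce at hkey
          have hkeyΦ := sum_off_two (f := fun l => (v l - w l)^2) (g := fun l => (v l - u l)^2)
            (p := i₀) (q := c) (Ne.symm hci₀)
            (fun l h1 h2 => by show (v l - w l)^2 = (v l - u l)^2; rw [hrest l h1 h2])
          beta_reduce at hkeyΦ
          have hDw_le : ∑ l, (v l - w l) ≤ d := le_trans (dist_le w v) (le_of_eq hvd)
          have hΦw_le : ∑ l, (v l - w l)^2 ≤ d * d :=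
            le_trans (phi_le w v) (Nat.mul_le_mul hDw_le hDw_le)
          have hMea : (∑ l, (v l - w l)) * K + (K - ∑ l, (v l - w l)^2)
              < (∑ l, (v l - u l)) * K + (K - ∑ l, (v l - u l)^2) := by
            rcases hcicases with hcD | hcS
            · -- c is a deficit position : distance drops by one
              have e1 : (v i₀ - w i₀) + 1 = v i₀ - u i₀ := by omega
              have e2 : v c - w c = 0 := by omega
              have e2' : v c - u c = 0 := by omega
              have hDw : (∑ l, (v l - w l)) + 1 = ∑ l, (v l - u l) := by omega
              have hkk : (∑ l, (v l - w l)) * K + K = (∑ l, (v l - u l)) * K := by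
                rw [← hDw]; ring
              omega
            · -- c is a surplus position : potential increases
              have hb : ρ c = (v c - u c) + 1 := by
                rw [ρdef, if_neg hc_i, if_neg (by omega), if_pos hcS]
              have hab : v i₀ - u i₀ ≤ v c - u c := by omega
              have e1 : (v i₀ - w i₀) + 1 = v i₀ - u i₀ := by omega
              have e2 : v c - w c = (v c - u c) + 1 := by omega
              have hDw : (∑ l, (v l - w l)) = ∑ l, (v l - u l) := by omega
              obtain ⟨a', ha'⟩ : ∃ a', v i₀ - u i₀ = a' + 1 := ⟨v i₀ - u i₀ - 1, by omega⟩
              have ef1 : (v i₀ - w i₀)^2 = a'^2 := by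
                rw [show v i₀ - w i₀ = a' by omega]
              have ef2 : (v c - w c)^2 = (v c - u c)^2 + 2*(v c - u c) + 1 := by
                rw [e2]; ring
              have eg1 : (v i₀ - u i₀)^2 = a'^2 + 2*a' + 1 := by rw [ha']; ring
              rw [ef1, ef2, eg1] at hkeyΦ
              have hab' : a' + 1 ≤ v c - u c := by omega
              have hΦw : (∑ l, (v l - u l)^2) + 2 ≤ ∑ l, (v l - w l)^2 := by
                generalize hA : a'^2 = A at hkeyΦ
                generalize hB : (v c - u c)^2 = B at hkeyΦ
                omega
              rw [hDw]
              omega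
          obtain ⟨j, hjw, hjmem⟩ := ih w v i hwG hv hwin (by omega)
          have hju : ∀ m, w m < v m → u m < v m := by
            intro m hm
            by_cases e1 : m = i₀
            · rw [e1]; exact hi₀
            · by_cases e2 : m = c
              · rcases hcicases with hcD | hcS
                · exfalso; rw [e2] at hm; omega
                · rw [e2]; exact hcS
              · rw [hrest m e1 e2] at hm; exact hm
          have hji2 : j ≠ i := fun he => by rw [he] at hjw; omega
          have hwi : w i = u i := hrest i (Ne.symm hi₀i) hic
          have hzG : exch w i j ∈ G := mem_of_memI hdeg hjmem
            (by rw [mdeg_exch (by omega) hji2]; exact hwd)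
          have hz_i : exch w i j i = w i - 1 := by simp [exch, Ne.symm hji2]
          have hz_j : exch w i j j = w j + 1 := by simp [exch, hji2]
          have hz_o : ∀ l, l ≠ i → l ≠ j → exch w i j l = w l := by
            intro l h1 h2; simp [exch, h1, h2]
          by_cases hjc : j = c
          · refine ⟨i₀, hi₀, ?_⟩
            have hE : exch u i i₀ = exch w i j := by
              funext l
              show u l - (if l = i then 1 else 0) + (if l = i₀ then 1 else 0) = exch w i j l
              by_cases e1 : l = i
              · rw [e1, if_pos rfl, if_neg (Ne.symm hi₀i), hz_i]
                omega
              · rw [if_neg e1]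
                by_cases e2 : l = i₀
                · rw [e2, if_pos rfl, hz_o i₀ hi₀i (fun he => hci₀ (by rw [← hjc, ← he]))]
                  omega
                · rw [if_neg e2]
                  by_cases e3 : l = j
                  · rw [e3, hz_j]
                    have h5 : w j + 1 = u j := by rw [hjc]; exact hcu
                    omega
                  · rw [hz_o l e1 e3]
                    have := hrest l e2 (fun he => e3 (he.trans hjc.symm))
                    omega
            rw [hE]; exact ⟨exch w i j, hzG, fun l => le_refl _⟩
          · have hzub : ∀ l, exch w i j l - u l ≤
                (if l = i₀ then 1 else 0) + (if l = j then 1 else 0) := by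
              intro l
              by_cases e1 : l = i
              · rw [e1, hz_i, if_neg (Ne.symm hi₀i), if_neg (Ne.symm hji2)]
                omega
              · by_cases e2 : l = j
                · rw [e2, hz_j, if_pos rfl]
                  by_cases e3 : j = i₀
                  · rw [if_pos e3]
                    have : w j = u j + 1 := by rw [e3]; exact hwi₀
                    omega
                  · rw [if_neg e3]
                    have : w j = u j := hrest j e3 hjc
                    omega
                · rw [hz_o l e1 e2, if_neg e2]
                  by_cases e3 : l = i₀
                  · rw [e3, if_pos rfl]; omega
                  · rw [if_neg e3]
                    by_cases e4 : l = c
                    · rw [e4]; omega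
                    · rw [hrest l e3 e4]; omega
            have hDz : ∑ l, (exch w i j l - u l) ≤ 2 := by
              calc ∑ l, (exch w i j l - u l)
                  ≤ ∑ l, ((if l = i₀ then 1 else 0) + (if l = j then 1 else 0)) :=
                    Finset.sum_le_sum (fun l _ => hzub l)
                _ = 2 := by
                    rw [Finset.sum_add_distrib]
                    simp [Finset.sum_ite_eq']
            have hzi : exch w i j i < u i := by
              have := hz_i
              omega
            have hMz : (∑ l, (exch w i j l - u l)) * K
                + (K - ∑ l, (exch w i j l - u l)^2) < N := by
              have h1 : (∑ l, (exch w i j l - u l)) * K ≤ 2 * K :=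
                Nat.mul_le_mul_right K hDz
              have h2 : 3 * K ≤ (∑ l, (v l - u l)) * K :=
                Nat.mul_le_mul_right K hD3
              omega
            obtain ⟨j', hj', hj'mem⟩ := ih u (exch w i j) i hu hzG hzi hMz
            refine ⟨j', ?_, hj'mem⟩
            by_cases e1 : j' = i₀
            · rw [e1]; exact hi₀
            · by_cases e2 : j' = j
              · rw [e2]; exact hju j hjw
              · exfalso
                have := hzub j'
                rw [if_neg e1, if_neg e2] at this
                omega
  intro u hu v hv i hvi
  exact main (((∑ l, (v l - u l)) * K + (K - ∑ l, (v l - u l)^2)) + 1) u v i hu hv hvi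
    (by omega)


end Stmt2

/-- A monomial ideal generated in a single degree is polymatroidal if and only if it has
linear quotients with respect to the lexicographic ordering of the minimal generators
induced by every ordering (permutation) of the variables. -/
theorem stmt_2 {n d : ℕ} (G : Set (Mon n)) (hdeg : ∀ u ∈ G, mdeg u = d) :
    IsPolymatroidal G ↔
      ∀ σ : Fin n → Fin n, Function.Bijective σ → LinQuot G (lexGT σ) := by
  constructor
  · intro hpoly σ _
    exact Stmt2.forward hdeg hpoly σ
  · intro hLQ
    exact Stmt2.reverse hdeg hLQ
end

section
/- Let I ⊂ K[x_1,x_2] be a monomial ideal generated in a single degree. Then the following are equivalent: (a) I is polymatroidal; (b) I has linear quotients with respect to the reverse lexicographical ordering of the minimal generators induced by every ordering of the variables; (c) I has a linear resolution. -/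
/-- The monomial of `K[x_1,…,x_n]` with exponent vector `u`. -/
noncomputable def monOf {n : ℕ} (K : Type) [Field K] (u : Mon n) :
    MvPolynomial (Fin n) K :=
  MvPolynomial.monomial (Finsupp.equivFunOnFinite.symm u) 1

/-- `I` has a linear resolution starting in degree `d`: there is an exact complex of
finite free modules `⋯ → S^{b₂} → S^{b₁} → S^{b₀} → S → S/I` whose first map is given
by homogeneous polynomials of degree `d` generating `I` and whose other differentials
are matrices with entries homogeneous of degree `1` (so the resolution is minimal and
linear, i.e. `F_i = S(-d-i)^{b_i}`). -/
def HasLinearResolution {n : ℕ} (K : Type) [Field K] (d : ℕ)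
    (I : Ideal (MvPolynomial (Fin n) K)) : Prop :=
  ∃ (b : ℕ → ℕ) (g : Fin (b 0) → MvPolynomial (Fin n) K)
    (A : ∀ i : ℕ, Matrix (Fin (b i)) (Fin (b (i + 1))) (MvPolynomial (Fin n) K)),
    (∀ j, (g j).IsHomogeneous d) ∧
    (∀ i j l, ((A i) j l).IsHomogeneous 1) ∧
    I = Ideal.span (Set.range g) ∧
    (∀ x : Fin (b 0) → MvPolynomial (Fin n) K,
      (∑ j, g j * x j = 0) ↔ ∃ y, (A 0).mulVec y = x) ∧
    (∀ i : ℕ, ∀ x : Fin (b (i + 1)) → MvPolynomial (Fin n) K,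
      ((A i).mulVec x = 0) ↔ ∃ y, (A (i + 1)).mulVec y = x)

/-! In two variables a monomial of degree `d` is determined by its exponent of `x_0`, so `G` is
determined by the set of these exponents, and each of the three conditions says that this set is
an interval. For polymatroidality and for linear quotients in the reverse lexicographic orders
this is a direct translation of the exchange conditions.

If the exponents form an interval `[m, m + e]`, the generators are `μ x_0^j x_1^(e-j)` for a common
monomial `μ`, and their syzygies are generated by the `e` independent linear syzygies
`x_0 e_j - x_1 e_(j+1)`: this is a linear resolution of length one. Conversely, let `u, v ∈ G`
with `u_0 < v_0` and no generator with exponent `u_0 + 1`. Reading off the coefficient of `x^u`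
in each generator gives a functional which sends the syzygy between `x_0^δ x^u` and
`x_1^δ x^v` (`δ = v_0 - u_0`) to `x_0^δ`, but sends every linear syzygy into `(x_1)`, because
`x_0 x^u / x_1` is not in `I`; so the syzygies are not generated in degree one. -/

open MvPolynomial Matrix

theorem memI_iff_mem {n d : ℕ} {G : Set (Mon n)} (hdeg : ∀ u ∈ G, mdeg u = d) {w : Mon n}
    (hw : mdeg w = d) : memI G w ↔ w ∈ G := by
  refine ⟨fun ⟨u, hu, huw⟩ => ?_, fun hwG => ⟨w, hwG, fun _ => le_rfl⟩⟩
  have hsum := (Finset.sum_eq_sum_iff_of_le fun l _ => huw l).mp ((hdeg u hu).trans hw.symm)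
  exact funext (fun l => hsum l (Finset.mem_univ l)) ▸ hu

theorem Set.ordConnected_of_add_one_mem {A : Set ℕ}
    (h : ∀ a ∈ A, ∀ b ∈ A, a < b → a + 1 ∈ A) : A.OrdConnected := by
  constructor
  rintro a ha b hb t ⟨hat, htb⟩
  induction t, hat using Nat.le_induction with
  | base => exact ha
  | succ t _ ih => exact h t (ih (by omega)) b hb (by omega)

section GradedComponents

attribute [local instance] MvPolynomial.gradedAlgebra

theorem homogeneousComponent_mul_of_isHomogeneous {σ R : Type*} [CommRing R] {n : ℕ}
    (f : MvPolynomial σ R) {p : MvPolynomial σ R} (hp : p.IsHomogeneous n) :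
    homogeneousComponent n (f * p) = C (coeff 0 f) * p := by
  have hdec : ∀ x i, (DirectSum.decompose (homogeneousSubmodule σ R) x i : MvPolynomial σ R) =
      homogeneousComponent i x := decomposition.decompose'_apply
  have := DirectSum.coe_decompose_mul_add_of_right_mem (homogeneousSubmodule σ R) (i := 0)
    (a := f) ((mem_homogeneousSubmodule n p).mpr hp)
  rwa [zero_add, hdec, hdec, homogeneousComponent_zero] at this

end GradedComponents

theorem exists_sum_C_mul_eq_of_isHomogeneous {σ R : Type*} [CommRing R] {N n : ℕ}
    {g : Fin N → MvPolynomial σ R} (hg : ∀ j, (g j).IsHomogeneous n) {p : MvPolynomial σ R}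
    (hp : p ∈ Ideal.span (Set.range g)) (hpn : p.IsHomogeneous n) :
    ∃ c : Fin N → R, ∑ j, C (c j) * g j = p := by
  obtain ⟨f, rfl⟩ := (Submodule.mem_span_range_iff_exists_fun _).mp hp
  refine ⟨fun j => coeff 0 (f j), ?_⟩
  rw [← homogeneousComponent_eq_self hpn, map_sum]
  exact Finset.sum_congr rfl fun j _ => (homogeneousComponent_mul_of_isHomogeneous _ (hg j)).symm

theorem coeff_eq_zero_of_not_memI {n : ℕ} {K : Type} [Field K] {G : Set (Mon n)}
    {p : MvPolynomial (Fin n) K} (hp : p ∈ Ideal.span (monOf K '' G)) {w : Mon n}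
    (hw : ¬ memI G w) : coeff (Finsupp.equivFunOnFinite.symm w) p = 0 := by
  rw [show monOf K = (fun s => monomial s (1 : K)) ∘ Finsupp.equivFunOnFinite.symm from rfl,
    Set.image_comp, mem_ideal_span_monomial_image] at hp
  by_contra h
  obtain ⟨_, ⟨u, hu, rfl⟩, hle⟩ := hp _ (mem_support_iff.mpr h)
  exact hw ⟨u, hu, fun l => by simpa using hle l⟩

theorem hasLinearResolution_of_injective {n N M d : ℕ} {K : Type} [Field K]
    (g : Fin N → MvPolynomial (Fin n) K) (A : Matrix (Fin N) (Fin M) (MvPolynomial (Fin n) K))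
    (hg : ∀ j, (g j).IsHomogeneous d) (hA : ∀ j l, (A j l).IsHomogeneous 1)
    (hsyz : ∀ x, g ⬝ᵥ x = 0 ↔ ∃ y, A *ᵥ y = x) (hinj : ∀ y, A *ᵥ y = 0 → y = 0) :
    HasLinearResolution K d (Ideal.span (Set.range g)) := by
  refine ⟨fun | 0 => N | 1 => M | _ + 2 => 0, g, fun | 0 => A | _ + 1 => 0, hg,
    fun | 0 => hA | _ + 1 => fun _ _ => isHomogeneous_zero _ _ _, rfl, hsyz, ?_⟩
  rintro (_ | i) x
  · refine ⟨fun hx => ⟨0, ?_⟩, fun ⟨y, hy⟩ => ?_⟩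
    · simpa using (hinj x hx).symm
    · simp [← hy]
  · exact ⟨fun _ => ⟨0, Subsingleton.elim _ _⟩, fun _ => zero_mulVec x⟩

theorem mdeg_two (u : Mon 2) : mdeg u = u 0 + u 1 := Fin.sum_univ_two u

theorem mdeg_exch {u : Mon 2} {i j : Fin 2} (hij : i ≠ j) (hi : 0 < u i) :
    mdeg (exch u i j) = mdeg u := by
  fin_cases i <;> fin_cases j <;> simp_all [mdeg_two, exch] <;> omega

def x0Degrees (G : Set (Mon 2)) : Set ℕ := (fun u => u 0) '' G

section TwoVariables

variable {d : ℕ} {G : Set (Mon 2)}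

theorem apply_zero_mem_x0Degrees {u : Mon 2} (hu : u ∈ G) : u 0 ∈ x0Degrees G := ⟨u, hu, rfl⟩

theorem mem_iff_mem_x0Degrees (hdeg : ∀ u ∈ G, mdeg u = d) {w : Mon 2} (hw : mdeg w = d) :
    w ∈ G ↔ w 0 ∈ x0Degrees G := by
  refine ⟨apply_zero_mem_x0Degrees, fun ⟨u, hu, (hu0 : u 0 = w 0)⟩ => ?_⟩
  have hud := hdeg u hu
  rw [mdeg_two] at hw hud
  convert hu using 1
  exact funext (Fin.forall_fin_two.mpr ⟨hu0.symm, by omega⟩)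

theorem exch_mem_of_ordConnected (hdeg : ∀ u ∈ G, mdeg u = d)
    (hG : (x0Degrees G).OrdConnected) {u v : Mon 2} (hu : u ∈ G) (hv : v ∈ G) {i j : Fin 2}
    (hvu : v i < u i) (hij : i ≠ j) : exch u i j ∈ G := by
  rw [mem_iff_mem_x0Degrees hdeg ((mdeg_exch hij (by omega)).trans (hdeg u hu))]
  refine hG.uIcc_subset (apply_zero_mem_x0Degrees hu) (apply_zero_mem_x0Degrees hv) ?_
  have hud := hdeg u hu
  have hvd := hdeg v hv
  rw [mdeg_two] at hud hvd
  rw [Set.mem_uIcc]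
  fin_cases i <;> fin_cases j <;> simp_all [exch] <;> omega

theorem isPolymatroidal_iff_ordConnected (hdeg : ∀ u ∈ G, mdeg u = d) :
    IsPolymatroidal G ↔ (x0Degrees G).OrdConnected := by
  refine ⟨fun hP => Set.ordConnected_of_add_one_mem ?_, fun hG u hu v hv i hvu => ?_⟩
  · rintro _ ⟨u, hu, rfl⟩ _ ⟨v, hv, rfl⟩ (huv : u 0 < v 0)
    have hud := hdeg u hu
    have hvd := hdeg v hv
    rw [mdeg_two] at hud hvd
    rcases Fin.exists_fin_two.mp (hP u hu v hv 1 (by omega)) with ⟨-, hmem⟩ | ⟨hj, -⟩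
    · have hexch := (mdeg_exch (i := 1) (j := 0) (by decide) (by omega)).trans (hdeg u hu)
      rw [memI_iff_mem hdeg hexch, mem_iff_mem_x0Degrees hdeg hexch] at hmem
      simpa [exch] using hmem
    · omega
  · obtain ⟨j, hji, hj⟩ : ∃ j, i ≠ j ∧ u j < v j := by
      have hud := hdeg u hu
      have hvd := hdeg v hv
      rw [mdeg_two] at hud hvd
      match i, hvu with
      | 0, hvu => exact ⟨1, by decide, by omega⟩
      | 1, hvu => exact ⟨0, by decide, by omega⟩
    refine ⟨j, hj, (memI_iff_mem hdeg ?_).mpr (exch_mem_of_ordConnected hdeg hG hu hv hvu hji)⟩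
    exact (mdeg_exch hji (by omega)).trans (hdeg u hu)

theorem rlexGT_iff {σ : Fin 2 → Fin 2} {u v : Mon 2} (h : mdeg u = mdeg v) :
    rlexGT σ u v ↔ u (σ 1) < v (σ 1) := by
  rw [mdeg_two, mdeg_two] at h
  simp only [rlexGT, Fin.exists_fin_two, Fin.forall_fin_two]
  generalize σ 0 = a
  generalize σ 1 = b
  fin_cases a <;> fin_cases b <;> simp <;> omega

theorem linQuot_rlexGT_iff_ordConnected (hdeg : ∀ u ∈ G, mdeg u = d) :
    (∀ σ : Fin 2 → Fin 2, Function.Bijective σ → LinQuot G (rlexGT σ)) ↔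
      (x0Degrees G).OrdConnected := by
  refine ⟨fun hL => Set.ordConnected_of_add_one_mem ?_, fun hG σ _ u hu v hv hvu => ?_⟩
  · rintro _ ⟨u, hu, rfl⟩ _ ⟨v, hv, rfl⟩ (huv : u 0 < v 0)
    have hud := hdeg u hu
    have hvd := hdeg v hv
    obtain ⟨i, -, w, hw, hwu, hle⟩ := hL id Function.bijective_id u hu v hv
      ((rlexGT_iff (hvd.trans hud.symm)).mpr (by rw [mdeg_two] at hud hvd; show v 1 < u 1; omega))
    have hwd := hdeg w hw
    replace hwu : w 1 < u 1 := (rlexGT_iff (hwd.trans hud.symm)).mp hwu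
    rw [mdeg_two] at hud hwd
    have hw0 : w 0 ≤ u 0 + 1 := (hle 0).trans (by split_ifs <;> omega)
    suffices w 0 = u 0 + 1 from this ▸ apply_zero_mem_x0Degrees hw
    omega
  · have hud := hdeg u hu
    have hvd := hdeg v hv
    rw [rlexGT_iff (hvd.trans hud.symm)] at hvu
    obtain ⟨j, hj⟩ : ∃ j, σ 1 ≠ j := ⟨σ 1 + 1, by simp⟩
    refine ⟨j, ?_, exch u (σ 1) j, exch_mem_of_ordConnected hdeg hG hu hv hvu hj,
      (rlexGT_iff (mdeg_exch hj (by omega))).mpr ?_, ?_⟩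
    all_goals
      rw [mdeg_two] at hud hvd
      generalize σ 1 = c at *
      fin_cases c <;> fin_cases j <;> simp_all [exch] <;> omega

end TwoVariables

noncomputable section Resolution

variable {K : Type} [Field K]

def monomVec (K : Type) [Field K] (e : ℕ) : Fin (e + 1) → MvPolynomial (Fin 2) K :=
  fun j => X 0 ^ (j : ℕ) * X 1 ^ (e - j)

def syzCol (K : Type) [Field K] (e : ℕ) (l : Fin e) : Fin (e + 1) → MvPolynomial (Fin 2) K :=
  Pi.single l.castSucc (X 0) - Pi.single l.succ (X 1)

def syzMat (K : Type) [Field K] (e : ℕ) : Matrix (Fin (e + 1)) (Fin e) (MvPolynomial (Fin 2) K) :=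
  Matrix.of fun j l => syzCol K e l j

theorem monomVec_dotProduct_syzCol (e : ℕ) (l : Fin e) : monomVec K e ⬝ᵥ syzCol K e l = 0 := by
  have hl : e - l = e - (l + 1) + 1 := by omega
  simp only [syzCol, dotProduct_sub, dotProduct_single, monomVec, Fin.val_castSucc, Fin.val_succ,
    hl]
  ring

theorem monomVec_vecMul_syzMat (e : ℕ) : monomVec K e ᵥ* syzMat K e = 0 :=
  funext fun l => monomVec_dotProduct_syzCol e l

theorem monomVec_succ_dotProduct (e : ℕ) (f : Fin (e + 2) → MvPolynomial (Fin 2) K) :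
    monomVec K (e + 1) ⬝ᵥ f = X 1 ^ (e + 1) * f 0 + X 0 * (monomVec K e ⬝ᵥ Fin.tail f) := by
  rw [dotProduct, dotProduct, Fin.sum_univ_succ, Finset.mul_sum]
  congr 1
  · simp [monomVec]
  · refine Finset.sum_congr rfl fun j _ => ?_
    simp only [monomVec, Fin.tail, Fin.val_succ, Nat.add_sub_add_right]
    ring

theorem syzCol_succ (e : ℕ) (l : Fin e) :
    syzCol K (e + 1) l.succ = Fin.cons 0 (syzCol K e l) := by
  ext i
  refine Fin.cases ?_ (fun i => ?_) i
  · simp [syzCol]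
  · simp [syzCol, Pi.single_apply]

theorem sum_smul_syzCol_succ (e : ℕ) (z : Fin (e + 1) → MvPolynomial (Fin 2) K) :
    ∑ l, z l • syzCol K (e + 1) l =
      z 0 • syzCol K (e + 1) 0 + Fin.cons 0 (∑ l, z l.succ • syzCol K e l) := by
  rw [Fin.sum_univ_succ]
  congr 1
  ext i
  refine Fin.cases ?_ (fun i => ?_) i <;> simp [Finset.sum_apply, syzCol_succ]

theorem X_zero_dvd_of_dvd_X_one_pow_mul {n : ℕ} {p : MvPolynomial (Fin 2) K}
    (h : X 0 ∣ X 1 ^ n * p) : X 0 ∣ p :=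
  (X_prime.dvd_or_dvd h).resolve_left fun h' =>
    absurd (X_dvd_X.mp (X_prime.dvd_of_dvd_pow h')) (by decide)

theorem exists_sum_smul_syzCol_eq {e : ℕ} {f : Fin (e + 1) → MvPolynomial (Fin 2) K}
    (hf : monomVec K e ⬝ᵥ f = 0) :
    ∃ z : Fin e → MvPolynomial (Fin 2) K, ∑ l, z l • syzCol K e l = f := by
  induction e with
  | zero =>
    refine ⟨0, funext fun i => ?_⟩
    rw [Fin.fin_one_eq_zero i, Finset.univ_eq_empty, Finset.sum_empty]
    simpa [dotProduct, monomVec] using hf.symm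
  | succ e ih =>
    have hsplit := monomVec_succ_dotProduct e f
    obtain ⟨a, ha⟩ : X 0 ∣ f 0 := X_zero_dvd_of_dvd_X_one_pow_mul (n := e + 1)
      ⟨-(monomVec K e ⬝ᵥ Fin.tail f), by linear_combination hf - hsplit⟩
    set f' := f - a • syzCol K (e + 1) 0 with hf'
    have hf'0 : f' 0 = 0 := by simp [f', ha, syzCol, mul_comm]
    have hf'syz : monomVec K (e + 1) ⬝ᵥ f' = 0 := by
      simp [f', dotProduct_sub, dotProduct_smul, monomVec_dotProduct_syzCol, hf]
    rw [monomVec_succ_dotProduct, hf'0, mul_zero, zero_add] at hf'syz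
    obtain ⟨z, hz⟩ := ih ((mul_eq_zero.mp hf'syz).resolve_left (X_ne_zero 0))
    refine ⟨Fin.cons a z, ?_⟩
    rw [sum_smul_syzCol_succ]
    simp only [Fin.cons_zero, Fin.cons_succ, hz]
    rw [← hf'0, Fin.cons_self_tail, hf', add_sub_cancel]

theorem eq_zero_of_sum_smul_syzCol_eq_zero {e : ℕ} {z : Fin e → MvPolynomial (Fin 2) K}
    (hz : ∑ l, z l • syzCol K e l = 0) : z = 0 := by
  induction e with
  | zero => exact Subsingleton.elim _ _
  | succ e ih =>
    rw [sum_smul_syzCol_succ] at hz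
    have hz0 : z 0 = 0 := by
      simpa [syzCol, X_ne_zero] using congrFun hz 0
    rw [hz0, zero_smul, zero_add] at hz
    have htail := ih (funext fun i => by simpa using congrFun hz i.succ)
    funext i
    exact Fin.cases hz0 (congrFun htail) i

theorem syzMat_mulVec (e : ℕ) (z : Fin e → MvPolynomial (Fin 2) K) :
    syzMat K e *ᵥ z = ∑ l, z l • syzCol K e l := by
  ext j
  simp [mulVec, dotProduct, syzMat, Finset.sum_apply, mul_comm]

theorem isHomogeneous_syzMat (e : ℕ) (j : Fin (e + 1)) (l : Fin e) :
    (syzMat K e j l).IsHomogeneous 1 := by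
  simp only [syzMat, syzCol, of_apply, Pi.sub_apply, Pi.single_apply]
  split_ifs <;> simp [isHomogeneous_X, isHomogeneous_zero, IsHomogeneous.sub, IsHomogeneous.neg]

theorem hasLinearResolution_of_consecutive_monomials (m e d : ℕ) (hmed : m + e ≤ d) :
    HasLinearResolution K d (Ideal.span (Set.range fun j : Fin (e + 1) =>
      (X 0 ^ (m + j) * X 1 ^ (d - (m + j)) : MvPolynomial (Fin 2) K))) := by
  set μ : MvPolynomial (Fin 2) K := X 0 ^ m * X 1 ^ (d - (m + e))
  have hμ : μ ≠ 0 := mul_ne_zero (pow_ne_zero _ (X_ne_zero _)) (pow_ne_zero _ (X_ne_zero _))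
  have hg : (fun j : Fin (e + 1) => (X 0 ^ (m + j) * X 1 ^ (d - (m + j)) :
      MvPolynomial (Fin 2) K)) = μ • monomVec K e := by
    funext j
    have : d - (m + j) = d - (m + e) + (e - j) := by omega
    simp only [Pi.smul_apply, smul_eq_mul, monomVec, μ, this, pow_add]
    ring
  refine hasLinearResolution_of_injective _ (syzMat K e) (fun j => ?_) (isHomogeneous_syzMat e)
    (fun x => ?_) (fun y hy => eq_zero_of_sum_smul_syzCol_eq_zero (syzMat_mulVec e y ▸ hy))
  · convert (isHomogeneous_X_pow (R := K) (0 : Fin 2) (m + j)).mul (isHomogeneous_X_pow 1 _)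
      using 1
    omega
  · rw [hg, smul_dotProduct, smul_eq_mul, mul_eq_zero, or_iff_right hμ]
    refine ⟨fun hx => ?_, fun ⟨y, hy⟩ => ?_⟩
    · obtain ⟨z, hz⟩ := exists_sum_smul_syzCol_eq hx
      exact ⟨z, (syzMat_mulVec e z).trans hz⟩
    · rw [← hy, dotProduct_mulVec, monomVec_vecMul_syzMat, zero_dotProduct]

end Resolution

theorem monOf_two {K : Type} [Field K] (u : Mon 2) : monOf K u = X 0 ^ u 0 * X 1 ^ u 1 := by
  simp [monOf, monomial_eq, Finsupp.prod_fintype, Fin.prod_univ_two]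

theorem MvPolynomial.IsHomogeneous.eq_C_mul_X_add_C_mul_X {K : Type} [Field K]
    {c : MvPolynomial (Fin 2) K} (hc : c.IsHomogeneous 1) :
    c = C (coeff (Finsupp.single 0 1) c) * X 0 + C (coeff (Finsupp.single 1 1) c) * X 1 := by
  ext s
  simp only [coeff_add, coeff_C_mul, coeff_X]
  by_cases hs : s.degree = 1
  · rw [Finsupp.degree_eq_sum, Fin.sum_univ_two] at hs
    rcases (by omega : s 0 = 1 ∧ s 1 = 0 ∨ s 0 = 0 ∧ s 1 = 1) with ⟨h0, h1⟩ | ⟨h0, h1⟩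
    · obtain rfl : s = Finsupp.single 0 1 := by ext i; fin_cases i <;> simp [h0, h1]
      simp [Finsupp.single_eq_single_iff]
    · obtain rfl : s = Finsupp.single 1 1 := by ext i; fin_cases i <;> simp [h0, h1]
      simp [Finsupp.single_eq_single_iff]
  · have hne : ∀ i : Fin 2, Finsupp.single i 1 ≠ s := fun i h => hs (h ▸ Finsupp.degree_single i 1)
    simp [hc.coeff_eq_zero hs, hne]

theorem X_one_dvd_of_linear_syzygy {K : Type} [Field K] {N : ℕ}
    {g c : Fin N → MvPolynomial (Fin 2) K} (hc : ∀ j, (c j).IsHomogeneous 1) (hgc : g ⬝ᵥ c = 0)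
    {s t : Fin 2 →₀ ℕ} (hst : t + Finsupp.single 1 1 = s + Finsupp.single 0 1)
    (ht : ∀ j, coeff t (g j) = 0) :
    X 1 ∣ (fun j => C (coeff s (g j))) ⬝ᵥ c := by
  set a : Fin N → K := fun j => coeff (Finsupp.single 0 1) (c j)
  set b : Fin N → K := fun j => coeff (Finsupp.single 1 1) (c j)
  have hcoeff : ∀ j, coeff (s + Finsupp.single 0 1) (g j * c j) = coeff s (g j) * a j := by
    intro j
    rw [(hc j).eq_C_mul_X_add_C_mul_X, mul_add, coeff_add, mul_left_comm, coeff_C_mul,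
      coeff_mul_X, mul_left_comm, coeff_C_mul, ← hst, coeff_mul_X, ht, mul_zero, add_zero,
      mul_comm]
  -- The coefficient of `x^(s + e_0)` in `g ⬝ᵥ c = 0` is the `x_0`-coefficient of the target
  -- plus a contribution through the coefficients at `t`, which vanish.
  have ha : ∑ j, coeff s (g j) * a j = 0 := by
    rw [← Finset.sum_congr rfl fun j _ => hcoeff j, ← coeff_sum]
    exact (congrArg _ hgc).trans (coeff_zero _)
  have hsplit : (fun j => C (coeff s (g j))) ⬝ᵥ c =
      C (∑ j, coeff s (g j) * a j) * X 0 + X 1 * C (∑ j, coeff s (g j) * b j) := by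
    simp only [dotProduct, map_sum, map_mul, Finset.sum_mul, Finset.mul_sum,
      ← Finset.sum_add_distrib]
    refine Finset.sum_congr rfl fun j _ => ?_
    rw [(hc j).eq_C_mul_X_add_C_mul_X]
    ring
  rw [hsplit, ha, map_zero, zero_mul, zero_add]
  exact dvd_mul_right _ _

theorem X_one_dvd_of_syzygy_of_linear_generators {K : Type} [Field K] {N M : ℕ}
    {g : Fin N → MvPolynomial (Fin 2) K} {A : Matrix (Fin N) (Fin M) (MvPolynomial (Fin 2) K)}
    (hA : ∀ j l, (A j l).IsHomogeneous 1) (hsyz : ∀ x, g ⬝ᵥ x = 0 ↔ ∃ y, A *ᵥ y = x)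
    {s t : Fin 2 →₀ ℕ} (hst : t + Finsupp.single 1 1 = s + Finsupp.single 0 1)
    (ht : ∀ j, coeff t (g j) = 0) {x : Fin N → MvPolynomial (Fin 2) K} (hx : g ⬝ᵥ x = 0) :
    X 1 ∣ (fun j => C (coeff s (g j))) ⬝ᵥ x := by
  obtain ⟨y, rfl⟩ := (hsyz x).mp hx
  rw [dotProduct_mulVec]
  refine Finset.dvd_sum fun l _ => dvd_mul_of_dvd_left ?_ _
  refine X_one_dvd_of_linear_syzygy (fun j => hA j l) ?_ hst ht
  exact (hsyz _).mpr ⟨Pi.single l 1, mulVec_single_one _ _⟩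

theorem exists_syzygy_coeff_dotProduct_eq {K : Type} [Field K] {N : ℕ}
    {g : Fin N → MvPolynomial (Fin 2) K} {u v : Mon 2}
    (hu : ∃ c : Fin N → K, ∑ j, C (c j) * g j = monOf K u)
    (hv : ∃ c : Fin N → K, ∑ j, C (c j) * g j = monOf K v)
    (huv : u 0 < v 0) (hdeg : mdeg u = mdeg v) :
    ∃ x, g ⬝ᵥ x = 0 ∧
      (fun j => C (coeff (Finsupp.equivFunOnFinite.symm u) (g j))) ⬝ᵥ x = X 0 ^ (v 0 - u 0) := by
  obtain ⟨cu, hcu⟩ := hu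
  obtain ⟨cv, hcv⟩ := hv
  rw [mdeg_two, mdeg_two] at hdeg
  set δ := v 0 - u 0 with hδ
  have hx : ∀ w : Fin N → MvPolynomial (Fin 2) K,
      w ⬝ᵥ (fun j => X 0 ^ δ * C (cu j) - X 1 ^ δ * C (cv j)) =
        X 0 ^ δ * ∑ j, C (cu j) * w j - X 1 ^ δ * ∑ j, C (cv j) * w j := by
    intro w
    simp only [dotProduct, Finset.mul_sum, ← Finset.sum_sub_distrib]
    exact Finset.sum_congr rfl fun j _ => by ring
  have hκ : ∀ c : Fin N → K, ∑ j, C (c j) * C (coeff (Finsupp.equivFunOnFinite.symm u) (g j)) =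
      (C (coeff (Finsupp.equivFunOnFinite.symm u) (∑ j, C (c j) * g j)) :
        MvPolynomial (Fin 2) K) := by
    simp only [coeff_sum, coeff_C_mul, map_sum, map_mul, implies_true]
  have hvu : Finsupp.equivFunOnFinite.symm v ≠ Finsupp.equivFunOnFinite.symm u := fun h =>
    huv.ne (by simpa using congrArg (· 0) h.symm)
  refine ⟨fun j => X 0 ^ δ * C (cu j) - X 1 ^ δ * C (cv j), ?_, ?_⟩
  · rw [hx, hcu, hcv, monOf_two, monOf_two, show v 0 = u 0 + δ by omega,
      show u 1 = v 1 + δ by omega]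
    ring
  · rw [hx, hκ, hκ, hcu, hcv, monOf, monOf, coeff_monomial, coeff_monomial, if_pos rfl,
      if_neg hvu]
    simp

section LinearResolution

variable {K : Type} [Field K] {d : ℕ} {G : Set (Mon 2)}

theorem add_one_mem_x0Degrees_of_hasLinearResolution
    (hdeg : ∀ u ∈ G, mdeg u = d) (hres : HasLinearResolution K d (Ideal.span (monOf K '' G)))
    {u v : Mon 2} (hu : u ∈ G) (hv : v ∈ G) (huv : u 0 < v 0) : u 0 + 1 ∈ x0Degrees G := by
  by_contra hgap
  obtain ⟨b, g, A, hg, hA, hspan, hsyz, -⟩ := hres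
  have hud := hdeg u hu
  have hvd := hdeg v hv
  rw [mdeg_two] at hud hvd
  have hexch := (mdeg_exch (i := 1) (j := 0) (by decide) (by omega)).trans (hdeg u hu)
  have ht : ∀ j, coeff (Finsupp.equivFunOnFinite.symm (exch u 1 0)) (g j) = 0 := by
    refine fun j => coeff_eq_zero_of_not_memI (G := G) ?_ ?_
    · rw [hspan]
      exact Ideal.subset_span ⟨j, rfl⟩
    rwa [memI_iff_mem hdeg hexch, mem_iff_mem_x0Degrees hdeg hexch,
      show exch u 1 0 0 = u 0 + 1 by simp [exch]]
  have hst : Finsupp.equivFunOnFinite.symm (exch u 1 0) + Finsupp.single 1 1 =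
      Finsupp.equivFunOnFinite.symm u + Finsupp.single 0 1 :=
    Finsupp.ext (Fin.forall_fin_two.mpr ⟨by simp [exch], by simp [exch]; omega⟩)
  have hcomb : ∀ w ∈ G, ∃ c : Fin (b 0) → K, ∑ j, C (c j) * g j = monOf K w := by
    refine fun w hw => exists_sum_C_mul_eq_of_isHomogeneous hg ?_
      (isHomogeneous_monomial _ (by simpa [Finsupp.degree_eq_sum, mdeg] using hdeg w hw))
    rw [← hspan]
    exact Ideal.subset_span ⟨w, hw, rfl⟩
  obtain ⟨x, hx, hκx⟩ := exists_syzygy_coeff_dotProduct_eq (hcomb u hu) (hcomb v hv) huv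
    ((hdeg u hu).trans (hdeg v hv).symm)
  have hdvd := X_one_dvd_of_syzygy_of_linear_generators (hA 0) hsyz hst ht hx
  rw [hκx] at hdvd
  exact absurd (X_dvd_X.mp (X_prime.dvd_of_dvd_pow hdvd)) (by decide)

theorem ordConnected_of_hasLinearResolution (hdeg : ∀ u ∈ G, mdeg u = d)
    (hres : HasLinearResolution K d (Ideal.span (monOf K '' G))) : (x0Degrees G).OrdConnected :=
  Set.ordConnected_of_add_one_mem <| by
    rintro _ ⟨u, hu, rfl⟩ _ ⟨v, hv, rfl⟩ huv
    exact add_one_mem_x0Degrees_of_hasLinearResolution hdeg hres hu hv huv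

theorem image_monOf_eq_range (hdeg : ∀ u ∈ G, mdeg u = d) {m e : ℕ}
    (hG : ∀ t, t ∈ x0Degrees G ↔ m ≤ t ∧ t ≤ m + e) :
    monOf K '' G = Set.range fun j : Fin (e + 1) => X 0 ^ (m + j) * X 1 ^ (d - (m + j)) := by
  ext p
  constructor
  · rintro ⟨u, hu, rfl⟩
    have hu0 := (hG _).mp (apply_zero_mem_x0Degrees hu)
    have hud := hdeg u hu
    rw [mdeg_two] at hud
    refine ⟨⟨u 0 - m, by omega⟩, ?_⟩
    rw [monOf_two]
    dsimp only
    rw [show m + (u 0 - m) = u 0 by omega, show d - u 0 = u 1 by omega]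
  · rintro ⟨j, rfl⟩
    obtain ⟨u, hu, hu0 : u 0 = m + j⟩ := (hG (m + j)).mpr ⟨by omega, by omega⟩
    have hud := hdeg u hu
    rw [mdeg_two] at hud
    exact ⟨u, hu, by rw [monOf_two, hu0, show u 1 = d - (m + j) by omega]⟩

theorem hasLinearResolution_of_ordConnected (hdeg : ∀ u ∈ G, mdeg u = d)
    (hG : (x0Degrees G).OrdConnected) : HasLinearResolution K d (Ideal.span (monOf K '' G)) := by
  rcases G.eq_empty_or_nonempty with rfl | hne
  · simpa using hasLinearResolution_of_injective (K := K) (d := d) ![]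
      (0 : Matrix (Fin 0) (Fin 0) (MvPolynomial (Fin 2) K)) (fun j => j.elim0) (fun j => j.elim0)
      (fun x => by simp [Subsingleton.elim x 0]) (fun y _ => Subsingleton.elim _ _)
  have hle : ∀ t ∈ x0Degrees G, t ≤ d := by
    rintro _ ⟨u, hu, rfl⟩
    exact (Nat.le_add_right _ _).trans_eq ((mdeg_two u).symm.trans (hdeg u hu))
  have hbdd : BddAbove (x0Degrees G) := ⟨d, hle⟩
  have hne' : (x0Degrees G).Nonempty := hne.image _
  have hm := Nat.sInf_mem hne'
  have hM := Nat.sSup_mem hne' hbdd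
  set m := sInf (x0Degrees G)
  set M := sSup (x0Degrees G)
  have hmM : m ≤ M := Nat.sInf_le hM
  have hIcc : ∀ t, t ∈ x0Degrees G ↔ m ≤ t ∧ t ≤ m + (M - m) := fun t => by
    rw [Nat.add_sub_cancel' hmM]
    exact ⟨fun ht => ⟨Nat.sInf_le ht, le_csSup hbdd ht⟩, fun ht => hG.out hm hM ht⟩
  rw [image_monOf_eq_range hdeg hIcc]
  exact hasLinearResolution_of_consecutive_monomials m (M - m) d (by have := hle M hM; omega)

end LinearResolution

/-- For a monomial ideal of `K[x_1,x_2]` generated in a single degree `d`, the following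
are equivalent: (a) `I` is polymatroidal; (b) `I` has linear quotients with respect to
the reverse lexicographic ordering of the minimal generators induced by every ordering
of the variables; (c) `I` has a linear resolution. -/
theorem stmt_3 (K : Type) [Field K] {d : ℕ} (G : Set (Mon 2))
    (hdeg : ∀ u ∈ G, mdeg u = d) :
    (IsPolymatroidal G ↔
        ∀ σ : Fin 2 → Fin 2, Function.Bijective σ → LinQuot G (rlexGT σ)) ∧
    (IsPolymatroidal G ↔ HasLinearResolution K d (Ideal.span (monOf K '' G))) := by
  have hpoly := isPolymatroidal_iff_ordConnected hdeg
  have hres : (x0Degrees G).OrdConnected ↔ HasLinearResolution K d (Ideal.span (monOf K '' G)) :=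
    ⟨hasLinearResolution_of_ordConnected hdeg, ordConnected_of_hasLinearResolution hdeg⟩
  exact ⟨hpoly.trans (linQuot_rlexGT_iff_ordConnected hdeg).symm, hpoly.trans hres⟩
end

section
/- Let I ⊂ K[x_1,...,x_n] be a monomial ideal generated in degree d containing the pure powers x_1^d,...,x_{n-1}^d. If I has linear quotients with respect to the reverse lexicographical ordering of the minimal generators induced by every ordering of the variables, then I is polymatroidal. -/
/-!
Fix `u, v ∈ G` with `v_i < u_i`. If `u_a < v_a` for some variable `x_a` other than the last
one, compare `u` with the pure power `c = x_a^d ∈ G`; otherwise the last variable `x_a` is the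
only one with `u_a < v_a`, and we compare `u` with `c = v`. In both cases `c` exceeds `u` only
at `a` and `c_i < u_i`. Order the variables so that `x_i` comes last and `x_a` second to last.
Then `c` is revlex-larger than `u`, so linear quotients give `x_a u ∈ (w)` for some
revlex-larger generator `w`. If `w` and `u` first differed (from the end) anywhere but at
`x_i`, then `w ≤ u` with `w ≠ u`, impossible in equal degree; so `w_i < u_i`, and by degree
`w = x_a (u / x_i)`.
-/

theorem exists_perm_apply_eq_last {n : ℕ} {a i : Fin (n + 1)} (hai : a ≠ i) :
    ∃ π : Equiv.Perm (Fin (n + 1)), π i = Fin.last n ∧ ∀ k ≠ i, π k ≤ π a := by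
  have hn : 1 ≤ n := by
    by_contra! h
    exact hai (Fin.ext (by omega))
  let p : Fin (n + 1) := ⟨n - 1, by omega⟩
  have hp : p ≠ Fin.last n := by simp only [ne_eq, Fin.ext_iff, Fin.val_last, p]; omega
  let τ := Equiv.swap i (Fin.last n)
  have hτa : τ a ≠ Fin.last n := by
    rw [← Equiv.swap_apply_left i (Fin.last n)]
    exact τ.injective.ne hai
  let π := τ.trans (Equiv.swap (τ a) p)
  have hπi : π i = Fin.last n := by
    simp only [π, Equiv.trans_apply, τ, Equiv.swap_apply_left]
    exact Equiv.swap_apply_of_ne_of_ne hτa.symm hp.symm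
  refine ⟨π, hπi, fun k hk => ?_⟩
  have hπk : π k ≠ Fin.last n := hπi ▸ π.injective.ne hk
  have hπa : π a = p := Equiv.swap_apply_left (τ a) p
  rw [hπa, Fin.le_def]
  exact Nat.le_sub_one_of_lt (Fin.val_lt_last hπk)

namespace Mon

variable {n : ℕ}

theorem mdeg_strictMono : StrictMono (mdeg : Mon n → ℕ) :=
  Fintype.sum_strictMono

theorem eq_of_le_of_mdeg_le {u v : Mon n} (huv : u ≤ v) (hdeg : mdeg v ≤ mdeg u) : u = v :=
  huv.eq_of_not_lt fun h => (mdeg_strictMono h).not_ge hdeg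

theorem exists_lt_of_mdeg_le {u v : Mon n} (hdeg : mdeg u ≤ mdeg v) (hne : u ≠ v) :
    ∃ k, u k < v k := by
  by_contra! h
  exact hne (eq_of_le_of_mdeg_le h hdeg).symm

theorem mdeg_exch (u : Mon n) {i : Fin n} (j : Fin n) (hi : 0 < u i) :
    mdeg (exch u i j) = mdeg u := by
  have hle : ∀ l ∈ Finset.univ, (if l = i then 1 else 0) ≤ u l := fun l _ => by
    split_ifs with h <;> [exact h ▸ hi; exact Nat.zero_le _]
  simp only [mdeg, exch, Finset.sum_add_distrib, Finset.sum_tsub_distrib _ hle,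
    Finset.sum_ite_eq', Finset.mem_univ, if_true]
  have : 1 ≤ ∑ l, u l := hi.trans_le (Finset.single_le_sum (fun _ _ => Nat.zero_le _)
    (Finset.mem_univ i))
  omega

theorem eq_exch_of_le {g w : Mon n} {a i : Fin n} (hai : a ≠ i)
    (hw : ∀ l, w l ≤ g l + if l = a then 1 else 0) (hwi : w i < g i)
    (hdeg : mdeg g ≤ mdeg w) :
    w = exch g i a := by
  refine eq_of_le_of_mdeg_le (fun l => ?_) (by rwa [mdeg_exch g a (by omega)])
  have hl := hw l
  rcases eq_or_ne l i with rfl | hli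
  · simp only [exch, if_true, if_neg hai.symm] at hl ⊢
    omega
  · simpa only [exch, if_neg hli, Nat.sub_zero] using hl

theorem rlexGT_of_lt_last {σ : Fin (n + 1) → Fin (n + 1)} {u v : Mon (n + 1)}
    (h : u (σ (Fin.last n)) < v (σ (Fin.last n))) : rlexGT σ u v :=
  ⟨Fin.last n, h, fun k hk => absurd hk (Fin.le_last k).not_gt⟩

/-- `π k` is the position of `x_k` in the variable ordering `π.symm`. -/
theorem lt_of_rlexGT_of_le {π : Equiv.Perm (Fin n)} {a i : Fin n}
    (hπa : ∀ k ≠ i, π k ≤ π a) {g w : Mon n}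
    (h : rlexGT π.symm w g) (hwg : ∀ l ≠ a, w l ≤ g l) (hdeg : mdeg g ≤ mdeg w) :
    w i < g i := by
  obtain ⟨p, hp, hafter⟩ := h
  obtain ⟨k, rfl⟩ := π.surjective p
  simp only [Equiv.symm_apply_apply] at hp hafter
  rcases eq_or_ne k i with rfl | hki
  · exact hp
  have hwa : w a ≤ g a := by
    rcases eq_or_ne k a with rfl | hka
    · exact hp.le
    · simpa using (hafter (π a) (lt_of_le_of_ne (hπa k hki) (π.injective.ne hka))).le
  have hlt : w < g := Pi.lt_def.2 ⟨fun l => if hl : l = a then hl ▸ hwa else hwg l hl, k, hp⟩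
  exact absurd hdeg (mdeg_strictMono hlt).not_ge

end Mon

open Mon

theorem exch_mem_of_forall_linQuot {n d : ℕ} {G : Set (Mon (n + 1))}
    (hdeg : ∀ u ∈ G, mdeg u = d)
    (hLQ : ∀ σ : Fin (n + 1) → Fin (n + 1), Function.Bijective σ → LinQuot G (rlexGT σ))
    {g c : Mon (n + 1)} (hg : g ∈ G) (hc : c ∈ G) {a i : Fin (n + 1)} (hai : a ≠ i)
    (hci : c i < g i) (hcg : ∀ k ≠ a, c k ≤ g k) :
    exch g i a ∈ G := by
  obtain ⟨π, hπi, hπa⟩ := exists_perm_apply_eq_last hai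
  have hlast : π.symm (Fin.last n) = i := π.symm_apply_eq.2 hπi.symm
  have hc_gt : rlexGT π.symm c g := rlexGT_of_lt_last (by rwa [hlast])
  obtain ⟨j, hj, w, hw, hw_gt, hwg⟩ := hLQ π.symm π.symm.bijective g hg c hc hc_gt
  obtain rfl : j = a := by
    by_contra h
    exact (hcg j h).not_gt hj
  have hdeg_le : mdeg g ≤ mdeg w := (hdeg g hg).trans (hdeg w hw).symm |>.le
  have hwi : w i < g i :=
    lt_of_rlexGT_of_le hπa hw_gt (fun l hl => by simpa [hl] using hwg l) hdeg_le
  rwa [← eq_exch_of_le hai hwg hwi hdeg_le]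

/-- If a monomial ideal generated in degree `d` contains the pure powers
`x_1^d, …, x_{n-1}^d` (all variables except the last) and has linear quotients with
respect to the reverse lexicographic ordering induced by every ordering of the
variables, then it is polymatroidal. -/
theorem stmt_5 {n d : ℕ} (G : Set (Mon (n + 1))) (hdeg : ∀ u ∈ G, mdeg u = d)
    (hpure : ∀ i : Fin (n + 1), i ≠ Fin.last n →
      (fun l => if l = i then d else 0) ∈ G)
    (hLQ : ∀ σ : Fin (n + 1) → Fin (n + 1), Function.Bijective σ →
      LinQuot G (rlexGT σ)) :
    IsPolymatroidal G := by
  intro u hu v hv i hvi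
  suffices ∃ a, u a < v a ∧ exch u i a ∈ G from
    this.imp fun a ⟨hav, hmem⟩ => ⟨hav, exch u i a, hmem, fun _ => le_rfl⟩
  by_cases h : ∃ a ≠ Fin.last n, u a < v a
  · obtain ⟨a, haL, hav⟩ := h
    have hai : a ≠ i := by rintro rfl; omega
    refine ⟨a, hav, exch_mem_of_forall_linQuot hdeg hLQ hu (hpure a haL) hai ?_ ?_⟩
    · simpa only [if_neg hai.symm] using (Nat.zero_le _).trans_lt hvi
    · intro k hk
      simp [hk]
  · push Not at h
    obtain ⟨a, hav⟩ := exists_lt_of_mdeg_le ((hdeg u hu).trans (hdeg v hv).symm).le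
      (fun huv => (huv ▸ hvi).false)
    obtain rfl : a = Fin.last n := by
      by_contra ha
      exact (h a ha).not_gt hav
    have hai : Fin.last n ≠ i := by rintro rfl; omega
    exact ⟨_, hav, exch_mem_of_forall_linQuot hdeg hLQ hu hv hai hvi h⟩
end

section
/- Let I ⊂ K[x_1,...,x_n] be a monomial ideal generated in degree d that contains x_1^d,...,x_{n-1}^d and has linear quotients with respect to the reverse lexicographical ordering induced by every ordering of variables. Let k = max{deg_{x_n}(u) : u ∈ G(I)}. Then every monomial of the form x_{i_1}^{α_1}···x_{i_h}^{α_h} x_n^k with i_1,...,i_h ∈ {1,...,n-1} distinct and α_1 + ··· + α_h = d − k belongs to G(I); equivalently, the monomial localization I(P_{{n}}) obtained by substituting x_n ↦ 1 equals (x_1,...,x_{n-1})^{d-k}. -/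
/-- In the setting of the pure-powers proposition, with
`k = max{deg_{x_n}(u) : u ∈ G(I)}`, every monomial of degree `d` whose `x_n`-exponent
equals `k` belongs to `G(I)`; equivalently `I(P_{{n}}) = (x_1,…,x_{n-1})^{d-k}`. -/
theorem stmt_6 {n d k : ℕ} (G : Set (Mon (n + 1))) (hdeg : ∀ u ∈ G, mdeg u = d)
    (hpure : ∀ i : Fin (n + 1), i ≠ Fin.last n →
      (fun l => if l = i then d else 0) ∈ G)
    (hLQ : ∀ σ : Fin (n + 1) → Fin (n + 1), Function.Bijective σ →
      LinQuot G (rlexGT σ))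
    (hk : IsGreatest {m : ℕ | ∃ u ∈ G, u (Fin.last n) = m} k) :
    ∀ w : Mon (n + 1), mdeg w = d → w (Fin.last n) = k → w ∈ G := by
  intro w hwd hwk
  obtain ⟨u0, hu0G, hu0k⟩ := hk.1
  have hwsum : ∑ l, w l = d := hwd
  suffices h : ∀ m : ℕ, ∀ u ∈ G, u (Fin.last n) = k → (∑ l, (w l - u l)) = m → w ∈ G by
    exact h _ u0 hu0G hu0k rfl
  intro m
  induction m using Nat.strong_induction_on with
  | _ m ih =>
    intro u huG huk hsum
    have husum : ∑ l, u l = d := hdeg u huG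
    by_cases hex : ∃ i, u i < w i
    · obtain ⟨i, hi⟩ := hex
      -- i ≠ last
      have hine : i ≠ Fin.last n := by
        intro h; rw [h, huk, hwk] at hi; exact lt_irrefl _ hi
      -- there is j with w j < u j
      have hexj : ∃ j, w j < u j := by
        by_contra hc
        push_neg at hc
        have : ∑ l, u l < ∑ l, w l :=
          Finset.sum_lt_sum (fun l _ => hc l) ⟨i, Finset.mem_univ i, hi⟩
        omega
      obtain ⟨j, hj⟩ := hexj
      set key : Fin (n + 1) → ℕ := fun l => if w l < u l then 2 else if l = i then 1 else 0
        with hkey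
      set σ : Equiv.Perm (Fin (n + 1)) := Tuple.sort key with hσ
      have hmono : Monotone (key ∘ σ) := Tuple.monotone_sort key
      set v : Mon (n + 1) := fun l => if l = i then d else 0 with hv
      have hvG : v ∈ G := hpure i hine
      -- last position in σ-order belongs to B = {l | w l < u l}
      have hlastB : w (σ (Fin.last n)) < u (σ (Fin.last n)) := by
        have h2 : key (σ (σ.symm j)) ≤ key (σ (Fin.last n)) :=
          hmono (Fin.le_last (σ.symm j))
        rw [Equiv.apply_symm_apply] at h2
        have hkj : key j = 2 := by simp [hkey, hj]
        rw [hkj] at h2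
        by_contra hc
        have : key (σ (Fin.last n)) ≤ 1 := by
          simp only [hkey]
          split_ifs <;> omega
        omega
      have hσlast_ne : σ (Fin.last n) ≠ i := by
        intro h; rw [h] at hlastB; omega
      have hgt : rlexGT σ v u := by
        refine ⟨Fin.last n, ?_, ?_⟩
        · have : v (σ (Fin.last n)) = 0 := by simp [hv, hσlast_ne]
          rw [this]; omega
        · intro q hq; exact absurd hq (not_lt.2 (Fin.le_last q))
      obtain ⟨i', hii', w', hw'G, hw'gt, hw'le⟩ := hLQ σ σ.bijective u huG v hvG hgt
      -- i' = i
      have hi'i : i' = i := by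
        by_contra hc
        have : v i' = 0 := by simp [hv, hc]
        rw [this] at hii'; omega
      rw [hi'i] at hii' hw'le
      clear hi'i
      -- deficit function
      have hw'sum : ∑ l, w' l = d := hdeg w' hw'G
      set c : Fin (n + 1) → ℕ := fun l => u l + (if l = i then 1 else 0) - w' l with hc
      have hcw' : ∀ l, w' l + c l = u l + (if l = i then 1 else 0) := by
        intro l
        have := hw'le l
        simp only [hc]
        omega
      have hcsum : ∑ l, c l = 1 := by
        have h1 : ∑ l, (w' l + c l) = ∑ l, (u l + (if l = i then 1 else 0)) := by
          exact Finset.sum_congr rfl (fun l _ => hcw' l)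
        rw [Finset.sum_add_distrib, Finset.sum_add_distrib] at h1
        have h2 : ∑ l, (if l = i then 1 else 0) = 1 := by
          simp [Finset.sum_ite_eq']
        omega
      obtain ⟨j', hj'mem, hj'ne⟩ :=
        Finset.exists_ne_zero_of_sum_ne_zero (by rw [hcsum]; omega :
          ∑ l ∈ Finset.univ, c l ≠ 0)
      have hcrest : ∀ l, l ≠ j' → c l = 0 := by
        have hsplit : c j' + ∑ l ∈ Finset.univ.erase j', c l = 1 := by
          rw [Finset.add_sum_erase _ c (Finset.mem_univ j')]; exact hcsum
        have hcj1 : c j' = 1 := by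
          have : 1 ≤ c j' := Nat.one_le_iff_ne_zero.2 hj'ne
          omega
        intro l hl
        have h0 : ∑ x ∈ Finset.univ.erase j', c x = 0 := by omega
        have := (Finset.sum_eq_zero_iff).1 h0 l (Finset.mem_erase.2 ⟨hl, Finset.mem_univ l⟩)
        exact this
      have hcj1 : c j' = 1 := by
        have : 1 ≤ c j' := Nat.one_le_iff_ne_zero.2 hj'ne
        have hsplit : c j' + ∑ l ∈ Finset.univ.erase j', c l = 1 := by
          rw [Finset.add_sum_erase _ c (Finset.mem_univ j')]; exact hcsum
        omega
      -- j' ≠ i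
      have hj'i : j' ≠ i := by
        intro h
        subst h
        -- then w' = u, contradicting rlexGT
        have hwu : ∀ l, w' l = u l := by
          intro l
          by_cases hl : l = j'
          · subst hl; have := hcw' l; simp at this ⊢; omega
          · have h0 := hcrest l hl
            have := hcw' l
            simp [hl] at this  -- if l = j' false
            omega
        obtain ⟨p, hp, _⟩ := hw'gt
        rw [hwu (σ p)] at hp
        exact lt_irrefl _ hp
      -- values of w'
      have hw'i : w' i = u i + 1 := by
        have := hcw' i
        have h0 := hcrest i (fun h => hj'i h.symm)
        simp at this
        omega
      have hw'j' : w' j' + 1 = u j' := by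
        have := hcw' j'
        simp [hj'i] at this
        omega
      have hw'other : ∀ l, l ≠ i → l ≠ j' → w' l = u l := by
        intro l hli hlj
        have := hcw' l
        have h0 := hcrest l hlj
        simp [hli] at this
        omega
      -- the rlexGT witness forces σ-position of i before that of j', hence key j' ≥ key i
      have hBj' : w j' < u j' := by
        obtain ⟨p, hp, hafter⟩ := hw'gt
        have hσp : σ p = j' := by
          by_contra hc'
          by_cases hpi : σ p = i
          · rw [hpi, hw'i] at hp; omega
          · rw [hw'other (σ p) hpi hc'] at hp; omega
        have hpi_lt : σ.symm i < p := by
          rcases lt_trichotomy (σ.symm i) p with h | h | h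
          · exact h
          · exfalso; apply hj'i; rw [← hσp, ← h, Equiv.apply_symm_apply]
          · exfalso
            have := hafter (σ.symm i) h
            rw [Equiv.apply_symm_apply, hw'i] at this
            omega
        have hm := hmono (le_of_lt hpi_lt)
        simp only [Function.comp_apply, Equiv.apply_symm_apply, hσp] at hm
        have hki : key i = 1 := by simp [hkey, not_lt.2 (le_of_lt hi)]
        rw [hki] at hm
        by_contra hc'
        have : key j' = 0 := by simp [hkey, hc', hj'i]
        omega
      have hj'last : j' ≠ Fin.last n := by
        intro h; rw [h, huk, hwk] at hBj'; exact lt_irrefl _ hBj'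
      have hw'k : w' (Fin.last n) = k := by
        rw [hw'other (Fin.last n) (fun h => hine h.symm) (fun h => hj'last h.symm)]
        exact huk
      -- distance decreases
      have hdist : (∑ l, (w l - w' l)) + 1 = ∑ l, (w l - u l) := by
        have hpt : ∀ l, (w l - w' l) + (if l = i then 1 else 0) = w l - u l := by
          intro l
          by_cases hli : l = i
          · subst hli; rw [hw'i]; simp; omega
          · by_cases hlj : l = j'
            · subst hlj; simp [hli]; omega
            · rw [hw'other l hli hlj]; simp [hli]
        calc (∑ l, (w l - w' l)) + 1
            = (∑ l, (w l - w' l)) + ∑ l, (if l = i then 1 else 0) := by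
              simp [Finset.sum_ite_eq']
          _ = ∑ l, ((w l - w' l) + (if l = i then 1 else 0)) := by
              rw [Finset.sum_add_distrib]
          _ = ∑ l, (w l - u l) := Finset.sum_congr rfl (fun l _ => hpt l)
      have hmpos : (∑ l, (w l - w' l)) < m := by omega
      exact ih _ hmpos w' hw'G hw'k rfl
    · push_neg at hex
      have : w = u := by
        funext l
        by_contra hc
        have hlt : w l < u l := lt_of_le_of_ne (hex l) hc
        have : ∑ x, w x < ∑ x, u x :=
          Finset.sum_lt_sum (fun x _ => hex x) ⟨l, Finset.mem_univ l, hlt⟩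
        omega
      rw [this]; exact huG
end

section
/- Let v = x_1^{b_1}···x_n^{b_n} ∈ M_d with v : x_1^{b_1+1}x_n^{d-b_1-1} = x_n^m for some m > 0 (equivalently v = x_1^{b_1} x_n^{d-b_1}), and let I = (u ∈ M_d : u ≥_lex v). Then I = Σ_{i=b_1}^{d} x_1^i · (x_2,...,x_n)^{d-i}, and I is polymatroidal. -/
lemma exists_sub_sum {α : Type*} [DecidableEq α] (s : Finset α) (f : α → ℕ) (m : ℕ)
    (h : m ≤ ∑ x ∈ s, f x) :
    ∃ g : α → ℕ, (∀ x, g x ≤ f x) ∧ (∀ x ∉ s, g x = 0) ∧ ∑ x ∈ s, g x = m := by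
  induction s using Finset.induction_on generalizing m with
  | empty =>
    refine ⟨fun _ => 0, fun _ => Nat.zero_le _, fun _ _ => rfl, ?_⟩
    simp only [Finset.sum_empty] at h ⊢
    omega
  | @insert a s ha ih =>
    rw [Finset.sum_insert ha] at h
    obtain ⟨g, hg1, hg2, hg3⟩ := ih (m - min m (f a)) (by omega)
    refine ⟨Function.update g a (min m (f a)), ?_, ?_, ?_⟩
    · intro x
      rcases eq_or_ne x a with rfl | hx
      · simp
      · simp [Function.update_of_ne hx, hg1 x]
    · intro x hx
      simp only [Finset.mem_insert, not_or] at hx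
      rw [Function.update_of_ne hx.1]
      exact hg2 x hx.2
    · rw [Finset.sum_insert ha, Function.update_self]
      have : ∑ x ∈ s, Function.update g a (min m (f a)) x = ∑ x ∈ s, g x :=
        Finset.sum_congr rfl fun x hx => Function.update_of_ne (by rintro rfl; exact ha hx) _ _
      rw [this, hg3]
      omega

lemma mdeg_exch' {n : ℕ} (u : Fin n → ℕ) (i j : Fin n) (hui : 1 ≤ u i) :
    ∑ l, (u l - (if l = i then 1 else 0) + (if l = j then 1 else 0)) = ∑ l, u l := by
  rw [Finset.sum_add_distrib]
  have h2 : ∑ l : Fin n, (if l = j then 1 else 0) = 1 := by simp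
  have h3 : ∑ l : Fin n, (u l - if l = i then 1 else 0)
      = ∑ l ∈ Finset.univ.erase i, u l + (u i - 1) := by
    rw [← Finset.sum_erase_add _ _ (Finset.mem_univ i)]
    simp only [if_pos rfl]
    congr 1
    exact Finset.sum_congr rfl fun l hl => by
      rw [if_neg (Finset.mem_erase.mp hl).1, Nat.sub_zero]
  have h4 : ∑ l ∈ Finset.univ.erase i, u l + u i = ∑ l, u l :=
    Finset.sum_erase_add _ _ (Finset.mem_univ i)
  omega

/-- For `v = x_1^{b_1} x_n^{d-b_1}`, the initial lexsegment ideal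
`I = (u ∈ M_d : u ≥_lex v)` equals `Σ_{i=b_1}^{d} x_1^i (x_2,…,x_n)^{d-i}`, and `I`
is polymatroidal. -/
theorem stmt_9 {n d b₁ : ℕ} (hb : b₁ ≤ d)
    (v : Mon (n + 2))
    (hv : v = fun l => if l = 0 then b₁ else if l = Fin.last (n + 1) then d - b₁ else 0)
    (G : Set (Mon (n + 2))) (hG : G = {u | mdeg u = d ∧ lexGE id u v}) :
    (∀ w : Mon (n + 2), memI G w ↔
        ∃ i, b₁ ≤ i ∧ i ≤ d ∧ i ≤ w 0 ∧ d - i ≤ ∑ l ∈ Finset.univ.erase 0, w l) ∧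
      IsPolymatroidal G := by
  have hlast0 : (Fin.last (n + 1) : Fin (n + 2)) ≠ 0 := by
    simp [Fin.ext_iff]
  have hv0 : v 0 = b₁ := by rw [hv]; simp
  have hvlast : v (Fin.last (n + 1)) = d - b₁ := by
    rw [hv]; simp [hlast0]
  have hvother : ∀ l : Fin (n + 2), l ≠ 0 → l ≠ Fin.last (n + 1) → v l = 0 := by
    intro l h1 h2; rw [hv]; simp [h1, h2]
  have hmv : mdeg v = d := by
    unfold mdeg
    have hpt : ∀ l : Fin (n + 2),
        v l = (if l = 0 then b₁ else 0) + (if l = Fin.last (n + 1) then d - b₁ else 0) := by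
      intro l
      rcases eq_or_ne l 0 with rfl | h1
      · simp [hv0, Ne.symm hlast0]
      rcases eq_or_ne l (Fin.last (n + 1)) with rfl | h2
      · simp [hvlast, hlast0]
      · simp [hvother l h1 h2, h1, h2]
    rw [Finset.sum_congr rfl fun l _ => hpt l, Finset.sum_add_distrib]
    simp
    omega
  -- characterization of G
  have hGiff : ∀ u : Mon (n + 2), u ∈ G ↔ (mdeg u = d ∧ b₁ ≤ u 0) := by
    intro u
    rw [hG]
    simp only [Set.mem_setOf_eq]
    constructor
    · rintro ⟨hd, hlex⟩
      refine ⟨hd, ?_⟩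
      rcases hlex with rfl | ⟨i, hlt, hpr⟩
      · exact hv0.symm.le
      · rcases eq_or_ne i 0 with rfl | hi0
        · simp only [id_eq] at hlt; omega
        · have h0i : (0 : Fin (n + 2)) < i := Fin.pos_of_ne_zero hi0
          have := hpr 0 h0i
          simp only [id_eq] at this
          rw [this, hv0]
    · rintro ⟨hd, hb1⟩
      refine ⟨hd, ?_⟩
      rcases eq_or_ne u v with rfl | huv
      · exact Or.inl rfl
      right
      rcases lt_or_eq_of_le hb1 with hlt | heq0
      · exact ⟨0, by simpa [hv0] using hlt, fun k hk => absurd hk (Fin.not_lt_zero k)⟩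
      -- u 0 = b₁ = v 0; find minimal differing index
      have hne : (Finset.univ.filter fun k => u k ≠ v k).Nonempty := by
        by_contra h
        rw [Finset.not_nonempty_iff_eq_empty, Finset.filter_eq_empty_iff] at h
        exact huv (funext fun k => not_not.mp (h (Finset.mem_univ k)))
      set S := Finset.univ.filter fun k => u k ≠ v k with hS
      set i := S.min' hne with hi
      have hiS : i ∈ S := Finset.min'_mem _ _
      have hid : u i ≠ v i := by
        rw [hS] at hiS; simpa using hiS
      have hmin : ∀ k, k < i → u k = v k := by
        intro k hk
        by_contra hne'
        exact absurd (Finset.min'_le S k (by simp [hS, hne'])) (not_le.mpr hk)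
      have hi0 : i ≠ 0 := by
        intro h; rw [h] at hid; exact hid (by rw [hv0, ← heq0])
      have hilast : i ≠ Fin.last (n + 1) := by
        intro h
        have hall : ∀ k : Fin (n + 2), k ≠ Fin.last (n + 1) → u k = v k := by
          intro k hk
          exact hmin k (h ▸ lt_of_le_of_ne (Fin.le_last k) hk)
        have he : ∑ l ∈ Finset.univ.erase (Fin.last (n + 1)), u l
            = ∑ l ∈ Finset.univ.erase (Fin.last (n + 1)), v l :=
          Finset.sum_congr rfl fun l hl => hall l (Finset.mem_erase.mp hl).1
        have h1 : ∑ l ∈ Finset.univ.erase (Fin.last (n + 1)), u l + u (Fin.last (n + 1))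
            = mdeg u := Finset.sum_erase_add _ _ (Finset.mem_univ _)
        have h2 : ∑ l ∈ Finset.univ.erase (Fin.last (n + 1)), v l + v (Fin.last (n + 1))
            = mdeg v := Finset.sum_erase_add _ _ (Finset.mem_univ _)
        apply hid
        rw [h]
        omega
      have hvi : v i = 0 := hvother i hi0 hilast
      refine ⟨i, ?_, fun k hk => hmin k hk⟩
      simp only [id_eq, hvi]
      omega
  constructor
  · intro w
    constructor
    · rintro ⟨u, huG, hle⟩
      obtain ⟨hd, hb1⟩ := (hGiff u).mp huG
      refine ⟨u 0, hb1, ?_, hle 0, ?_⟩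
      · exact hd ▸ Finset.single_le_sum (fun l _ => Nat.zero_le (u l)) (Finset.mem_univ 0)
      · have h1 : ∑ l ∈ Finset.univ.erase 0, u l + u 0 = d :=
          hd ▸ Finset.sum_erase_add _ _ (Finset.mem_univ 0)
        have h2 : ∑ l ∈ Finset.univ.erase 0, u l ≤ ∑ l ∈ Finset.univ.erase 0, w l :=
          Finset.sum_le_sum fun l _ => hle l
        omega
    · rintro ⟨i, hbi, hidd, hiw, hsum⟩
      obtain ⟨g, hg1, hg2, hg3⟩ := exists_sub_sum (Finset.univ.erase 0) w (d - i) hsum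
      refine ⟨fun l => if l = 0 then i else g l, ?_, ?_⟩
      · rw [hGiff]
        constructor
        · unfold mdeg
          rw [← Finset.sum_erase_add _ _ (Finset.mem_univ (0 : Fin (n + 2)))]
          have : ∑ l ∈ Finset.univ.erase 0, (if l = 0 then i else g l)
              = ∑ l ∈ Finset.univ.erase (0 : Fin (n+2)), g l :=
            Finset.sum_congr rfl fun l hl => if_neg (Finset.mem_erase.mp hl).1
          rw [this, hg3]
          simp
          omega
        · simpa using hbi
      · intro l
        rcases eq_or_ne l 0 with rfl | hl
        · simpa using hiw
        · simpa [hl] using hg1 l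
  · intro u hu v' hv' i hlt
    obtain ⟨hdu, hbu⟩ := (hGiff u).mp hu
    obtain ⟨hdv, hbv⟩ := (hGiff v').mp hv'
    have hj : ∃ j, u j < v' j := by
      by_contra h
      push_neg at h
      have : mdeg v' < mdeg u := Finset.sum_lt_sum (fun l _ => h l) ⟨i, Finset.mem_univ i, hlt⟩
      omega
    obtain ⟨j, hjlt⟩ := hj
    refine ⟨j, hjlt, exch u i j, ?_, fun l => le_refl _⟩
    rw [hGiff]
    have hui : 1 ≤ u i := by omega
    constructor
    · exact (mdeg_exch' u i j hui).trans hdu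
    · unfold exch
      rcases eq_or_ne i 0 with rfl | hi0
      · have : b₁ < u 0 := lt_of_le_of_lt hbv hlt
        split_ifs <;> omega
      · rw [if_neg (Ne.symm hi0)]
        split_ifs <;> omega
end
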